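/- arXiv:math/0103146 — 10 statements merged into one kernel-verified Lean document; each statement's English description precedes it below -/
import Mathlib

section
/- For r ≥ 2, k ≥ 2, 1 ≤ s < r, and sn ≥ kr, the r-th s-disjoint Kneser hypergraph of all k-subsets of [n] admits a proper coloring with at most 1 + ⌈(1/⌊(r-1)/s⌋)·(ns-rk+1)/s⌉ colors; explicitly, the coloring S ↦ min(⌈min(S)/P⌉, M+1) with P = ⌊(r-1)/s⌋ and M = ⌈(ns-rk+1)/(Ps)⌉ is proper. -/
open Finset

/-- **Lemma 1 (explicit coloring of generalized Kneser hypergraphs).**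
For `r ≥ 2`, `k ≥ 2`, `1 ≤ s < r` and `sn ≥ kr`, the explicit coloring
`S ↦ min (⌈min S / P⌉, M+1)` with `P = ⌊(r-1)/s⌋` and `M = ⌈(ns-rk+1)/(Ps)⌉`
uses colors in `{1, …, M+1}` (so at most `1 + ⌈(1/P)·(ns-rk+1)/s⌉` colors) and is a
proper coloring of `KG^r_s ([n] choose k)`: no `s`-disjoint `r`-family of distinct
`k`-subsets of `[n]` is monochromatic. (Ceiling division `⌈a/b⌉` is `(a + (b-1))/b`.) -/
theorem kneser_hypergraph_coloring (n r k s : ℕ) (hr : 2 ≤ r) (hk : 2 ≤ k)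
    (hs1 : 1 ≤ s) (hsr : s < r) (hkr : k * r ≤ s * n)
    (P M : ℕ) (hP : P = (r - 1) / s)
    (hM : M = (n * s - r * k + 1 + (P * s - 1)) / (P * s))
    (c : Finset ℕ → ℕ)
    (hc : ∀ S : Finset ℕ, c S = min ((sInf (S : Set ℕ) + (P - 1)) / P) (M + 1)) :
    (∀ S : Finset ℕ, S ⊆ Icc 1 n → S.card = k → 1 ≤ c S ∧ c S ≤ M + 1) ∧
    (∀ A : Fin r → Finset ℕ, (∀ j, A j ⊆ Icc 1 n) → (∀ j, (A j).card = k) →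
      Function.Injective A →
      (∀ i ∈ Icc 1 n, (Finset.univ.filter fun j => i ∈ A j).card ≤ s) →
      ∃ j j', c (A j) ≠ c (A j')) := by
  have hP1 : 1 ≤ P := by
    subst hP; rw [Nat.one_le_div_iff (by omega : 0 < s)]; omega
  -- opaque names for the products that occur in the arithmetic
  obtain ⟨ns, hns⟩ : ∃ z, n * s = z := ⟨_, rfl⟩
  obtain ⟨rk, hrk⟩ : ∃ z, r * k = z := ⟨_, rfl⟩
  obtain ⟨ps, hps⟩ : ∃ z, P * s = z := ⟨_, rfl⟩
  obtain ⟨pm, hpm⟩ : ∃ z, ps * M = z := ⟨_, rfl⟩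
  rw [hns, hrk, hps] at hM
  have hkrns : rk ≤ ns := by
    rw [← hns, ← hrk]
    calc r * k = k * r := Nat.mul_comm r k
      _ ≤ s * n := hkr
      _ = n * s := Nat.mul_comm s n
  have hrk4 : 4 ≤ rk := by
    rw [← hrk]
    calc (4 : ℕ) = 2 * 2 := rfl
      _ ≤ r * k := Nat.mul_le_mul hr hk
  have hpsr : ps ≤ r - 1 := by
    rw [← hps, hP]; exact Nat.div_mul_le_self (r - 1) s
  have hps0 : 0 < ps := by
    rw [← hps]; exact Nat.mul_pos (by omega) (by omega)
  have hkey : ns - rk + 1 ≤ pm := by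
    have h1 := Nat.div_add_mod (ns - rk + 1 + (ps - 1)) ps
    have h2 := Nat.mod_lt (ns - rk + 1 + (ps - 1)) hps0
    rw [← hM] at h1
    rw [hpm] at h1
    omega
  have part1 : ∀ S : Finset ℕ, S ⊆ Icc 1 n → S.card = k → 1 ≤ c S ∧ c S ≤ M + 1 := by
    intro S hS hcard
    have hne : S.Nonempty := Finset.card_pos.mp (by omega)
    have hmemS : sInf (S : Set ℕ) ∈ S :=
      Finset.mem_coe.mp (Nat.sInf_mem (Finset.coe_nonempty.mpr hne))
    have h1 : 1 ≤ sInf (S : Set ℕ) := (Finset.mem_Icc.mp (hS hmemS)).1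
    rw [hc]
    refine ⟨le_min ?_ (by omega), min_le_right _ _⟩
    rw [Nat.one_le_div_iff (by omega : 0 < P)]; omega
  refine ⟨part1, ?_⟩
  intro A hA hcard hinj hdisj
  by_contra hcon
  push_neg at hcon
  have hmem : ∀ j, sInf ((A j : Set ℕ)) ∈ A j := fun j =>
    Finset.mem_coe.mp (Nat.sInf_mem (Finset.coe_nonempty.mpr
      (Finset.card_pos.mp (by rw [hcard j]; omega))))
  have hmle : ∀ j, ∀ i ∈ A j, sInf ((A j : Set ℕ)) ≤ i := fun j i hi =>
    Nat.sInf_le (Finset.mem_coe.mpr hi)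
  have hj0 : (0 : ℕ) < r := by omega
  obtain ⟨t, htdef⟩ : ∃ t, c (A ⟨0, hj0⟩) = t := ⟨_, rfl⟩
  have hmono : ∀ j, c (A j) = t := fun j => (hcon j ⟨0, hj0⟩).trans htdef
  have ht1 : 1 ≤ t ∧ t ≤ M + 1 := by
    have := part1 (A ⟨0, hj0⟩) (hA ⟨0, hj0⟩) (hcard ⟨0, hj0⟩)
    omega
  by_cases htM : t ≤ M
  · -- color `t ≤ M` : all minima lie in an interval of `P` consecutive integers
    obtain ⟨u, hu⟩ : ∃ z, P * t = z := ⟨_, rfl⟩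
    have hPu : P ≤ u := by
      rw [← hu]; exact Nat.le_mul_of_pos_right P (by omega)
    have hrange : ∀ j, u - P < sInf ((A j : Set ℕ)) ∧ sInf ((A j : Set ℕ)) ≤ u := by
      intro j
      have hcj := hmono j
      rw [hc] at hcj
      have hdivt : (sInf ((A j : Set ℕ)) + (P - 1)) / P = t := by
        rcases min_cases ((sInf ((A j : Set ℕ)) + (P - 1)) / P) (M + 1) with
          ⟨h1, h2⟩ | ⟨h1, h2⟩ <;> omega
      have h1 := Nat.div_add_mod (sInf ((A j : Set ℕ)) + (P - 1)) P
      rw [hdivt, hu] at h1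
      have h2 := Nat.mod_lt (sInf ((A j : Set ℕ)) + (P - 1)) (show 0 < P by omega)
      omega
    have hsub : (univ : Finset (Fin r)) ⊆ (Ioc (u - P) u).biUnion
        (fun i => univ.filter fun j => i ∈ A j) := by
      intro j _
      rw [Finset.mem_biUnion]
      exact ⟨sInf ((A j : Set ℕ)), Finset.mem_Ioc.mpr ⟨(hrange j).1, (hrange j).2⟩,
        Finset.mem_filter.mpr ⟨Finset.mem_univ _, hmem j⟩⟩
    have hfilt : ∀ i ∈ Ioc (u - P) u, (univ.filter fun j => i ∈ A j).card ≤ s := by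
      intro i _
      by_cases hi : i ∈ Icc 1 n
      · exact hdisj i hi
      · have : (univ.filter fun j => i ∈ A j) = ∅ :=
          Finset.filter_eq_empty_iff.mpr (fun j _ h => hi (hA j h))
        rw [this]; simp
    have hcardI : (Ioc (u - P) u).card = P := by
      rw [Nat.card_Ioc]; omega
    have hcount : r ≤ ps := by
      calc r = (univ : Finset (Fin r)).card := (Finset.card_fin r).symm
        _ ≤ ((Ioc (u - P) u).biUnion (fun i => univ.filter fun j => i ∈ A j)).card :=
              Finset.card_le_card hsub
        _ ≤ ∑ i ∈ Ioc (u - P) u, (univ.filter fun j => i ∈ A j).card :=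
              Finset.card_biUnion_le
        _ ≤ ∑ i ∈ Ioc (u - P) u, s := Finset.sum_le_sum hfilt
        _ = ps := by rw [Finset.sum_const, hcardI, smul_eq_mul, hps]
    omega
  · -- color `M + 1` : all the sets live inside `Icc (M*P+1) n`
    obtain ⟨mp, hmp⟩ : ∃ z, M * P = z := ⟨_, rfl⟩
    have hmin : ∀ j, mp + 1 ≤ sInf ((A j : Set ℕ)) := by
      intro j
      have hcj := hmono j
      rw [hc] at hcj
      have hge : M + 1 ≤ (sInf ((A j : Set ℕ)) + (P - 1)) / P := by
        rcases min_cases ((sInf ((A j : Set ℕ)) + (P - 1)) / P) (M + 1) with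
          ⟨h1, h2⟩ | ⟨h1, h2⟩ <;> omega
      have h1 := (Nat.le_div_iff_mul_le (show 0 < P by omega)).mp hge
      have h2 : (M + 1) * P = mp + P := by rw [← hmp]; ring
      rw [h2] at h1
      omega
    have hsub : ∀ j, A j ⊆ Icc (mp + 1) n := by
      intro j i hi
      have h1 := hmle j i hi
      have h2 := (Finset.mem_Icc.mp (hA j hi)).2
      have h3 := hmin j
      exact Finset.mem_Icc.mpr ⟨by omega, h2⟩
    have hsum : r * k ≤ (n - mp) * s := by
      calc r * k = ∑ _j : Fin r, k := by rw [Finset.sum_const, Finset.card_fin, smul_eq_mul]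
        _ = ∑ j : Fin r, ((Icc (mp + 1) n).filter (fun i => i ∈ A j)).card := by
              refine Finset.sum_congr rfl fun j _ => ?_
              rw [Finset.filter_mem_eq_inter, Finset.inter_eq_right.mpr (hsub j), hcard j]
        _ = ∑ j : Fin r, ∑ i ∈ Icc (mp + 1) n, if i ∈ A j then 1 else 0 := by
              refine Finset.sum_congr rfl fun j _ => ?_
              rw [Finset.card_filter]
        _ = ∑ i ∈ Icc (mp + 1) n, ∑ j : Fin r, if i ∈ A j then 1 else 0 :=
              Finset.sum_comm
        _ = ∑ i ∈ Icc (mp + 1) n, (univ.filter fun j => i ∈ A j).card := by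
              refine Finset.sum_congr rfl fun i _ => ?_
              rw [Finset.card_filter]
        _ ≤ ∑ i ∈ Icc (mp + 1) n, s := by
              refine Finset.sum_le_sum fun i hi => ?_
              have := Finset.mem_Icc.mp hi
              exact hdisj i (Finset.mem_Icc.mpr ⟨by omega, this.2⟩)
        _ = (n - mp) * s := by
              rw [Finset.sum_const, Nat.card_Icc, smul_eq_mul]; congr 1; omega
    have e2 : mp * s = pm := by rw [← hmp, ← hpm, ← hps]; ring
    rw [Nat.sub_mul, e2, hns, hrk] at hsum
    omega
end

section
/- Let r ≥ 2, n ≥ k ≥ 2, t ≥ 1, 1 ≤ s < r, and n ≥ tk. Then the s-disjoint r-colorability defect of the hypergraph of t-stable k-subsets of [n] equals max{ns - tr(k-1), 0}. -/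
open Finset

/-!
Upper bound: on the `n`-cycle with `n ≥ t k`, every set of more than `t (k - 1)` points contains
a `t`-stable `k`-set. For `n = t k` this is pigeonhole on residues mod `t`, since a full residue
class is `t`-stable; for larger `n`, delete a point outside the set (or any point, if the set is
everything) and contract the cycle: stability in the shorter cycle lifts back, because deleting a
point lowers every distance by at most one. Hence every colour class has at most `t (k - 1)`
elements, and `s`-disjointness bounds the total by `n s`.

Lower bound: walk `s` times around the cycle, position `q` visiting the point `q % n + 1`, and cut
the first `min (n s) (r t (k - 1))` positions into `r` consecutive blocks of length `t (k - 1)`.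
Points of one block come from a window shorter than `n`, so a `t`-stable subset of it has its
positions pairwise `t` apart and hence has at most `k - 1` elements; each point is visited at most
`s` times.
-/

def IsCyclicStable (n t : ℕ) (S : Finset ℕ) : Prop :=
  ∀ a ∈ S, ∀ b ∈ S, a ≠ b → t ≤ Nat.dist a b ∧ Nat.dist a b ≤ n - t

namespace IsCyclicStable

variable {n t k : ℕ} {S : Finset ℕ}

theorem of_modEq (hS : S ⊆ Icc 1 (t * k)) (hmod : ∀ a ∈ S, ∀ b ∈ S, a ≡ b [MOD t]) :
    IsCyclicStable (t * k) t S := by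
  intro a ha b hb hab
  have hab_mod : a % t = b % t := hmod a ha b hb
  have hdist : Nat.dist a b = t * Nat.dist (a / t) (b / t) := by
    rw [← Nat.dist_mul_left, ← Nat.dist_add_add_right (t * (a / t)) (a % t)]
    have := Nat.div_add_mod a t
    have := Nat.div_add_mod b t
    congr 1 <;> omega
  have hd_pos : 0 < Nat.dist (a / t) (b / t) := Nat.dist_pos_of_ne fun h =>
    hab (by rw [← Nat.div_add_mod a t, ← Nat.div_add_mod b t, h, hab_mod])
  have ha' := mem_Icc.mp (hS ha)
  have hb' := mem_Icc.mp (hS hb)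
  have hd_lt : Nat.dist (a / t) (b / t) < k := by
    refine Nat.lt_of_mul_lt_mul_left (a := t) ?_
    rw [← hdist, Nat.dist]
    omega
  have h1 : t ≤ t * Nat.dist (a / t) (b / t) := Nat.le_mul_of_pos_right t hd_pos
  have h2 : t * Nat.dist (a / t) (b / t) ≤ t * (k - 1) := Nat.mul_le_mul_left t (by omega)
  rw [Nat.mul_sub_one] at h2
  omega

end IsCyclicStable

theorem exists_isCyclicStable_subset_of_subset_Icc_mul {t k : ℕ} {R : Finset ℕ}
    (hR : R ⊆ Icc 1 (t * k)) (hcard : t * (k - 1) < #R) :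
    ∃ S ⊆ R, #S = k ∧ IsCyclicStable (t * k) t S := by
  have ht : 0 < t := Nat.pos_of_ne_zero (by rintro rfl; simp_all)
  obtain ⟨y, -, hy⟩ := exists_lt_card_fiber_of_mul_lt_card_of_maps_to (s := R) (t := range t)
    (f := (· % t)) (n := k - 1) (fun x _ => mem_range.mpr (Nat.mod_lt x ht)) (by rwa [card_range])
  obtain ⟨S, hSy, hS⟩ := exists_subset_card_eq (s := {x ∈ R | x % t = y}) (n := k) (by omega)
  have hSR : S ⊆ R := hSy.trans (filter_subset _ _)
  refine ⟨S, hSR, hS, IsCyclicStable.of_modEq (hSR.trans hR) fun a ha b hb => ?_⟩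
  exact ((mem_filter.mp (hSy ha)).2).trans (mem_filter.mp (hSy hb)).2.symm

def shiftAbove (z x : ℕ) : ℕ := if z ≤ x then x + 1 else x

def unshiftAbove (z x : ℕ) : ℕ := if z < x then x - 1 else x

theorem shiftAbove_injective (z : ℕ) : Function.Injective (shiftAbove z) := by
  intro x y h
  unfold shiftAbove at h
  split_ifs at h <;> omega

theorem shiftAbove_unshiftAbove {z x : ℕ} (hx : x ≠ z) : shiftAbove z (unshiftAbove z x) = x := by
  unfold shiftAbove unshiftAbove
  split_ifs <;> omega

theorem IsCyclicStable.image_shiftAbove {n t z : ℕ} {S : Finset ℕ} (hS : IsCyclicStable n t S) :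
    IsCyclicStable (n + 1) t (S.image (shiftAbove z)) := by
  simp only [IsCyclicStable, mem_image]
  rintro _ ⟨a, ha, rfl⟩ _ ⟨b, hb, rfl⟩ hab
  have := hS a ha b hb (fun h => hab (h ▸ rfl))
  unfold shiftAbove Nat.dist at *
  split_ifs <;> omega

theorem exists_isCyclicStable_subset_succ {n t k z : ℕ} {R : Finset ℕ}
    (ih : ∀ R ⊆ Icc 1 n, t * (k - 1) < #R → ∃ S ⊆ R, #S = k ∧ IsCyclicStable n t S)
    (hz : z ∈ Icc 1 (n + 1)) (hR : R ⊆ Icc 1 (n + 1)) (hcard : t * (k - 1) < #(R.erase z)) :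
    ∃ S ⊆ R, #S = k ∧ IsCyclicStable (n + 1) t S := by
  have hz' := mem_Icc.mp hz
  have hinj : Set.InjOn (unshiftAbove z) (R.erase z) := by
    intro x hx y hy h
    rw [← shiftAbove_unshiftAbove (mem_erase.mp hx).1, h,
      shiftAbove_unshiftAbove (mem_erase.mp hy).1]
  have hsub : (R.erase z).image (unshiftAbove z) ⊆ Icc 1 n := by
    simp only [subset_iff, mem_image, mem_erase]
    rintro _ ⟨x, ⟨hxz, hxR⟩, rfl⟩
    have := mem_Icc.mp (hR hxR)
    unfold unshiftAbove
    split_ifs <;> simp only [mem_Icc] <;> omega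
  obtain ⟨S, hSsub, hScard, hS⟩ := ih _ hsub (by rwa [card_image_of_injOn hinj])
  refine ⟨S.image (shiftAbove z), ?_, ?_, hS.image_shiftAbove⟩
  · intro x hx
    obtain ⟨y, hy, rfl⟩ := mem_image.mp hx
    obtain ⟨w, hw, rfl⟩ := mem_image.mp (hSsub hy)
    rw [shiftAbove_unshiftAbove (mem_erase.mp hw).1]
    exact mem_of_mem_erase hw
  · rwa [card_image_of_injective _ (shiftAbove_injective z)]

theorem exists_isCyclicStable_subset {n t k : ℕ} {R : Finset ℕ} (ht : 0 < t) (hk : 0 < k)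
    (hn : t * k ≤ n) (hR : R ⊆ Icc 1 n) (hcard : t * (k - 1) < #R) :
    ∃ S ⊆ R, #S = k ∧ IsCyclicStable n t S := by
  induction n, hn using Nat.le_induction generalizing R with
  | base => exact exists_isCyclicStable_subset_of_subset_Icc_mul hR hcard
  | succ n hn ih =>
    by_cases hfull : Icc 1 (n + 1) ⊆ R
    · refine exists_isCyclicStable_subset_succ (fun _ => ih) (z := n + 1) (by simp) hR ?_
      have h1 := Nat.mul_sub_one t k
      have h2 : t ≤ t * k := Nat.le_mul_of_pos_right t hk
      rw [subset_antisymm hR hfull, card_erase_of_mem (by simp), Nat.card_Icc]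
      simp only [Nat.add_sub_cancel]
      omega
    · obtain ⟨z, hz, hzR⟩ := not_subset.mp hfull
      exact exists_isCyclicStable_subset_succ (fun _ => ih) hz hR
        (by rwa [erase_eq_of_notMem hzR])

theorem eq_of_mod_eq_of_mem_Ico {n c a b : ℕ} (ha : a ∈ Ico c (c + n)) (hb : b ∈ Ico c (c + n))
    (h : a % n = b % n) : a = b := by
  rw [mem_Ico] at ha hb
  exact Nat.ModEq.eq_of_abs_lt h (by rw [abs_lt]; omega)

theorem le_sub_of_le_dist_mod {n t a b : ℕ} (hab : a < b) (hb : b < a + n)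
    (hd : t ≤ Nat.dist (a % n) (b % n)) (hd' : Nat.dist (a % n) (b % n) ≤ n - t) : t ≤ b - a := by
  obtain ⟨d, rfl⟩ := Nat.exists_eq_add_of_le hab.le
  have := Nat.mod_lt a (by omega : 0 < n)
  rw [Nat.add_mod_eq_ite, Nat.mod_eq_of_lt (by omega : d < n)] at hd hd'
  unfold Nat.dist at hd hd'
  split_ifs at hd hd' <;> omega

theorem card_le_of_forall_add_le {A : Finset ℕ} {c t m : ℕ} (hA : A ⊆ Ico c (c + t * m))
    (hsep : ∀ a ∈ A, ∀ b ∈ A, a < b → a + t ≤ b) : #A ≤ m := by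
  rcases Nat.eq_zero_or_pos t with rfl | ht
  · simp_all
  have hdiv : StrictMonoOn (fun a => (a - c) / t) A := by
    intro a ha b hb hab
    have := (mem_Ico.mp (hA ha)).1
    calc (a - c) / t < (a - c) / t + 1 := Nat.lt_succ_self _
      _ = (a - c + t) / t := (Nat.add_div_right _ ht).symm
      _ ≤ (b - c) / t := Nat.div_le_div_right (by have := hsep a ha b hb hab; omega)
  calc #A ≤ #(range m) := card_le_card_of_injOn _ (fun a ha => ?_) hdiv.injOn
    _ = m := card_range m
  have := mem_Ico.mp (hA ha)
  exact mem_range.mpr (Nat.div_lt_of_lt_mul (by omega))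

theorem IsCyclicStable.card_le_of_subset_image {n t c m : ℕ} {B S : Finset ℕ}
    (hS : IsCyclicStable n t S) (hB : B ⊆ Ico c (c + t * m)) (htm : t * m ≤ n)
    (hSB : S ⊆ B.image (fun q => q % n + 1)) : #S ≤ m := by
  set A := {q ∈ B | q % n + 1 ∈ S}
  have hSA : S ⊆ A.image (fun q => q % n + 1) := by
    intro x hx
    obtain ⟨q, hq, rfl⟩ := mem_image.mp (hSB hx)
    exact mem_image_of_mem _ (mem_filter.mpr ⟨hq, hx⟩)
  have hBn : B ⊆ Ico c (c + n) := hB.trans (Ico_subset_Ico_right (by omega))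
  calc #S ≤ #(A.image (fun q => q % n + 1)) := card_le_card hSA
    _ ≤ #A := card_image_le
    _ ≤ m := card_le_of_forall_add_le ((filter_subset _ _).trans hB) ?_
  intro a ha b hb hab
  obtain ⟨haB, haS⟩ := mem_filter.mp ha
  obtain ⟨hbB, hbS⟩ := mem_filter.mp hb
  have hne : a % n + 1 ≠ b % n + 1 := fun h =>
    hab.ne (eq_of_mod_eq_of_mem_Ico (hBn haB) (hBn hbB) (by omega))
  obtain ⟨h1, h2⟩ := hS _ haS _ hbS hne
  rw [Nat.dist_add_add_right] at h1 h2
  have := mem_Ico.mp (hBn haB)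
  have := mem_Ico.mp (hBn hbB)
  have := le_sub_of_le_dist_mod hab (by omega) h1 h2
  omega

theorem sum_card_le_of_forall_card_filter_le {ι α : Type*} [Fintype ι] [DecidableEq α]
    {R : ι → Finset α} {U : Finset α} {s : ℕ} (hR : ∀ j, R j ⊆ U)
    (hmult : ∀ i ∈ U, #{j | i ∈ R j} ≤ s) : ∑ j, #(R j) ≤ #U * s :=
  calc ∑ j, #(R j) = ∑ j, #(U.bipartiteAbove (fun j i => i ∈ R j) j) := by
        simp only [bipartiteAbove, filter_mem_eq_inter, inter_eq_right.mpr (hR _)]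
    _ = ∑ i ∈ U, #(univ.bipartiteBelow (fun j i => i ∈ R j) i) :=
        sum_card_bipartiteAbove_eq_sum_card_bipartiteBelow _
    _ ≤ ∑ _i ∈ U, s := sum_le_sum hmult
    _ = #U * s := by rw [sum_const, smul_eq_mul]

theorem card_le_of_forall_not_subset {n t k : ℕ} {R : Finset ℕ} (ht : 0 < t) (hk : 0 < k)
    (hn : t * k ≤ n) (hR : R ⊆ Icc 1 n)
    (hfree : ∀ S ⊆ Icc 1 n, #S = k → IsCyclicStable n t S → ¬ S ⊆ R) : #R ≤ t * (k - 1) := by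
  by_contra! hcard
  obtain ⟨S, hSR, hSk, hS⟩ := exists_isCyclicStable_subset ht hk hn hR hcard
  exact hfree S (hSR.trans hR) hSk hS hSR

def cyclicBlock (n L M j : ℕ) : Finset ℕ := {q ∈ range M | q / L = j}.image (fun q => q % n + 1)

section cyclicBlock

variable {n L M : ℕ}

theorem filter_div_eq_subset_Ico (hL : 0 < L) (j : ℕ) :
    {q ∈ range M | q / L = j} ⊆ Ico (j * L) (j * L + L) := by
  intro q hq
  have := (Nat.div_eq_iff hL).mp (mem_filter.mp hq).2
  rw [mem_Ico]
  omega

theorem cyclicBlock_subset_Icc (hn : 0 < n) (j : ℕ) : cyclicBlock n L M j ⊆ Icc 1 n := by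
  intro x hx
  obtain ⟨q, -, rfl⟩ := mem_image.mp hx
  have := Nat.mod_lt q hn
  rw [mem_Icc]
  omega

theorem card_cyclicBlock (hL : 0 < L) (hLn : L ≤ n) (j : ℕ) :
    #(cyclicBlock n L M j) = #{q ∈ range M | q / L = j} := by
  have hsub := (filter_div_eq_subset_Ico (M := M) hL j).trans
    (Ico_subset_Ico_right (Nat.add_le_add_left hLn _))
  refine card_image_of_injOn fun a ha b hb h => eq_of_mod_eq_of_mem_Ico (hsub ha) (hsub hb) ?_
  simpa using h

theorem sum_card_cyclicBlock {r : ℕ} (hL : 0 < L) (hLn : L ≤ n) (hM : M ≤ r * L) :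
    ∑ j : Fin r, #(cyclicBlock n L M j) = M := by
  simp_rw [card_cyclicBlock hL hLn]
  rw [Fin.sum_univ_eq_sum_range (fun j => #{q ∈ range M | q / L = j}) r,
    ← card_eq_sum_card_fiberwise, card_range]
  intro q hq
  rw [mem_coe, mem_range] at hq
  exact mem_range.mpr (Nat.div_lt_of_lt_mul (by rw [mul_comm]; omega))

theorem card_filter_mem_cyclicBlock_le {r s : ℕ} (hM : M ≤ n * s) (i : ℕ) :
    #{j : Fin r | i ∈ cyclicBlock n L M j} ≤ s := by
  set P := {q ∈ range M | q % n + 1 = i}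
  calc #{j : Fin r | i ∈ cyclicBlock n L M j}
      = #(({j | i ∈ cyclicBlock n L M j} : Finset (Fin r)).map Fin.valEmbedding) :=
        (card_map _).symm
    _ ≤ #(P.image (· / L)) := card_le_card ?_
    _ ≤ #P := card_image_le
    _ ≤ #(range s) := card_le_card_of_injOn (· / n) ?_ ?_
    _ = s := card_range s
  · intro j hj
    simp only [mem_map, mem_filter_univ, Fin.valEmbedding_apply, cyclicBlock, mem_image] at hj
    obtain ⟨j, ⟨q, hq, rfl⟩, rfl⟩ := hj
    exact mem_image.mpr ⟨q, mem_filter.mpr ⟨(mem_filter.mp hq).1, rfl⟩, (mem_filter.mp hq).2⟩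
  · intro q hq
    exact mem_range.mpr (Nat.div_lt_of_lt_mul
      ((mem_range.mp (mem_filter.mp hq).1).trans_le hM))
  · intro a ha b hb h
    have hab : a % n = b % n := by
      have := (mem_filter.mp ha).2
      have := (mem_filter.mp hb).2
      omega
    rw [← Nat.div_add_mod a n, ← Nat.div_add_mod b n, hab]
    exact congrArg (n * · + b % n) h

theorem not_subset_cyclicBlock {t k : ℕ} {S : Finset ℕ} (hL : 0 < t * (k - 1))
    (hLn : t * (k - 1) ≤ n) (hS : IsCyclicStable n t S) (hSk : #S = k) (j : ℕ) :
    ¬ S ⊆ cyclicBlock n (t * (k - 1)) M j := by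
  intro hsub
  have := hS.card_le_of_subset_image (filter_div_eq_subset_Ico hL j) hLn hsub
  have := Nat.pos_of_mul_pos_left hL
  omega

end cyclicBlock

theorem cd_t_stable_general (n r k t s : ℕ) (hk : 2 ≤ k) (ht : 1 ≤ t) (htk : t * k ≤ n) :
    n * s - sSup {m : ℕ | ∃ R : Fin r → Finset ℕ,
        (∀ j, R j ⊆ Icc 1 n) ∧
        (∀ i ∈ Icc 1 n, (Finset.univ.filter fun j => i ∈ R j).card ≤ s) ∧
        (∀ j, ∀ S : Finset ℕ, S ⊆ Icc 1 n → S.card = k →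
            (∀ a ∈ S, ∀ b ∈ S, a ≠ b → t ≤ Nat.dist a b ∧ Nat.dist a b ≤ n - t) →
            ¬ S ⊆ R j) ∧
        m = ∑ j, (R j).card} = n * s - t * r * (k - 1) := by
  have hL : 0 < t * (k - 1) := Nat.mul_pos ht (by omega)
  have hLn : t * (k - 1) < n := by
    have := Nat.mul_sub_one t k
    have := Nat.le_mul_of_pos_right t (by omega : 0 < k)
    omega
  set M := min (n * s) (r * (t * (k - 1)))
  rw [IsGreatest.csSup_eq (a := M) ⟨?_, ?_⟩]
  · have : t * r * (k - 1) = r * (t * (k - 1)) := by ring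
    omega
  · exact ⟨fun j => cyclicBlock n (t * (k - 1)) M j, fun j => cyclicBlock_subset_Icc (by omega) j,
      fun i _ => card_filter_mem_cyclicBlock_le (min_le_left _ _) i,
      fun j S _ hSk hS => not_subset_cyclicBlock hL hLn.le hS hSk j,
      (sum_card_cyclicBlock hL hLn.le (min_le_right _ _)).symm⟩
  · rintro _ ⟨R, hR, hmult, hfree, rfl⟩
    refine le_min ?_ ?_
    · simpa using sum_card_le_of_forall_card_filter_le hR hmult
    · calc ∑ j, #(R j) ≤ ∑ _j : Fin r, t * (k - 1) :=
            sum_le_sum fun j _ => card_le_of_forall_not_subset ht (by omega) htk (hR j) (hfree j)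
        _ = r * (t * (k - 1)) := by simp

/-- **Lemma 2 (s-disjoint r-colorability defect of t-stable k-subsets).**
For `r ≥ 2`, `n ≥ k ≥ 2`, `t ≥ 1`, `1 ≤ s < r` and `n ≥ tk`:
`cd^r_s ([n] choose k)_{t-stab} = max (ns - tr(k-1)) 0` (natural subtraction is
truncated, so the right-hand side is `n*s - t*r*(k-1)` in `ℕ`).
A set `S ⊆ [n]` is `t`-stable iff any two distinct elements are at cyclic distance
at least `t`, i.e. `t ≤ |a-b| ≤ n - t`. -/
theorem cd_t_stable (n r k t s : ℕ) (hr : 2 ≤ r) (hk : 2 ≤ k) (hkn : k ≤ n)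
    (ht : 1 ≤ t) (hs1 : 1 ≤ s) (hsr : s < r) (htk : t * k ≤ n) :
    n * s - sSup {m : ℕ | ∃ R : Fin r → Finset ℕ,
        (∀ j, R j ⊆ Icc 1 n) ∧
        (∀ i ∈ Icc 1 n, (Finset.univ.filter fun j => i ∈ R j).card ≤ s) ∧
        (∀ j, ∀ S : Finset ℕ, S ⊆ Icc 1 n → S.card = k →
            (∀ a ∈ S, ∀ b ∈ S, a ≠ b → t ≤ Nat.dist a b ∧ Nat.dist a b ≤ n - t) →
            ¬ S ⊆ R j) ∧
        m = ∑ j, (R j).card} = n * s - t * r * (k - 1) :=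
  cd_t_stable_general n r k t s hk ht htk
end

section
/- Let r ≥ 2, n ≥ k ≥ 2, 1 ≤ s < r. Then the s-disjoint r-colorability defect of the hypergraph of all k-subsets of [n] equals max{ns - r(k-1), 0}. -/
open Finset

/-- **s-disjoint r-colorability defect of all k-subsets of [n].**
For `r ≥ 2`, `n ≥ k ≥ 2`, `1 ≤ s < r`:
`cd^r_s ([n] choose k) = max (ns - r(k-1)) 0` (ℕ-subtraction is truncated). -/
theorem cd_k_subsets (n r k s : ℕ) (hr : 2 ≤ r) (hk : 2 ≤ k) (hkn : k ≤ n)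
    (hs1 : 1 ≤ s) (hsr : s < r) :
    n * s - sSup {m : ℕ | ∃ R : Fin r → Finset ℕ,
        (∀ j, R j ⊆ Icc 1 n) ∧
        (∀ i ∈ Icc 1 n, (Finset.univ.filter fun j => i ∈ R j).card ≤ s) ∧
        (∀ j, ∀ S : Finset ℕ, S ⊆ Icc 1 n → S.card = k → ¬ S ⊆ R j) ∧
        m = ∑ j, (R j).card} = n * s - r * (k - 1) := by
  have hn : 1 ≤ n := le_trans (by omega) hkn
  set e := k - 1 with he
  have he1 : 1 ≤ e := by omega
  have hen : e < n := by omega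
  set T : Set ℕ := {m : ℕ | ∃ R : Fin r → Finset ℕ,
        (∀ j, R j ⊆ Icc 1 n) ∧
        (∀ i ∈ Icc 1 n, (Finset.univ.filter fun j => i ∈ R j).card ≤ s) ∧
        (∀ j, ∀ S : Finset ℕ, S ⊆ Icc 1 n → S.card = k → ¬ S ⊆ R j) ∧
        m = ∑ j, (R j).card} with hT
  set M : ℕ := min (r * e) (n * s) with hM
  -- Upper bound
  have hub : ∀ m ∈ T, m ≤ M := by
    rintro m ⟨R, h1, h2, h3, rfl⟩
    have hle1 : ∑ j, (R j).card ≤ r * e := by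
      have : ∀ j, (R j).card ≤ e := by
        intro j
        by_contra hc
        have hkc : k ≤ (R j).card := by omega
        obtain ⟨S, hS, hScard⟩ := Finset.exists_subset_card_eq hkc
        exact h3 j S (hS.trans (h1 j)) hScard hS
      calc ∑ j, (R j).card ≤ ∑ _j : Fin r, e := Finset.sum_le_sum fun j _ => this j
        _ = r * e := by simp [mul_comm]
    have hle2 : ∑ j, (R j).card ≤ n * s := by
      have hcard : ∀ j, (R j).card = ∑ i ∈ Icc 1 n, if i ∈ R j then 1 else 0 := by
        intro j
        rw [← Finset.card_filter]
        congr 1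
        rw [Finset.filter_mem_eq_inter]
        exact (Finset.inter_eq_right.mpr (h1 j)).symm
      calc ∑ j, (R j).card = ∑ j, ∑ i ∈ Icc 1 n, if i ∈ R j then 1 else 0 := by
            simp_rw [hcard]
        _ = ∑ i ∈ Icc 1 n, ∑ j, if i ∈ R j then 1 else 0 := Finset.sum_comm
        _ = ∑ i ∈ Icc 1 n, (Finset.univ.filter fun j => i ∈ R j).card := by
            simp only [Finset.card_filter]
        _ ≤ ∑ _i ∈ Icc 1 n, s := Finset.sum_le_sum h2
        _ = n * s := by simp [Nat.card_Icc]
    exact le_min hle1 hle2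
  -- Construction achieving M
  have hmem : M ∈ T := by
    refine ⟨fun j => (Finset.Ico (j.1 * e) (min ((j.1 + 1) * e) (n * s))).image
      (fun p => p % n + 1), ?_, ?_, ?_, ?_⟩
    · intro j x hx
      simp only [Finset.mem_image] at hx
      obtain ⟨p, _, rfl⟩ := hx
      have := Nat.mod_lt p hn
      simp only [Finset.mem_Icc]
      omega
    · intro i hi
      simp only [Finset.mem_Icc] at hi
      have hsub : (Finset.univ.filter fun j : Fin r =>
          i ∈ (Finset.Ico (j.1 * e) (min ((j.1 + 1) * e) (n * s))).image
            (fun p => p % n + 1)) ⊆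
          (Finset.range s).image (fun t =>
            (⟨((i - 1) + n * t) / e % r, Nat.mod_lt _ (by omega)⟩ : Fin r)) := by
        intro j hj
        simp only [Finset.mem_filter, Finset.mem_image, Finset.mem_Ico] at hj
        obtain ⟨-, p, ⟨hp1, hp2⟩, hp3⟩ := hj
        have hp3' : p % n + 1 = i := hp3
        have hpn : p < n * s := lt_of_lt_of_le hp2 (min_le_right _ _)
        have ht : p / n < s := Nat.div_lt_of_lt_mul hpn
        have hpmod : p % n = i - 1 := by omega
        have hpeq : (i - 1) + n * (p / n) = p := by
          rw [← hpmod]; exact Nat.mod_add_div p n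
        have hdiv : p / e = j.1 := by
          refine Nat.div_eq_of_lt_le ?_ ?_
          · omega
          · have := lt_of_lt_of_le hp2 (min_le_left _ _)
            omega
        simp only [Finset.mem_image, Finset.mem_range]
        refine ⟨p / n, ht, ?_⟩
        apply Fin.ext
        simp only [hpeq, hdiv, Nat.mod_eq_of_lt j.2]
      calc _ ≤ ((Finset.range s).image _).card := Finset.card_le_card hsub
        _ ≤ (Finset.range s).card := Finset.card_image_le
        _ = s := Finset.card_range s
    · intro j S hS hScard hsub
      have : k ≤ e := by
        calc k = S.card := hScard.symm
          _ ≤ _ := Finset.card_le_card hsub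
          _ ≤ (Finset.Ico (j.1 * e) (min ((j.1 + 1) * e) (n * s))).card :=
              Finset.card_image_le
          _ = min ((j.1 + 1) * e) (n * s) - j.1 * e := Nat.card_Ico _ _
          _ ≤ (j.1 + 1) * e - j.1 * e := by omega
          _ = e := by rw [Nat.succ_mul]; omega
      omega
    · -- sum of cards = M
      have hcard : ∀ j : Fin r,
          ((Finset.Ico (j.1 * e) (min ((j.1 + 1) * e) (n * s))).image
            (fun p => p % n + 1)).card
          = min ((j.1 + 1) * e) (n * s) - j.1 * e := by
        intro j
        rw [Finset.card_image_of_injOn, Nat.card_Ico]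
        intro p hp q hq hpq
        simp only [Finset.mem_Ico, Finset.coe_Ico, Set.mem_Ico] at hp hq
        have hwin : min ((j.1 + 1) * e) (n * s) - j.1 * e ≤ e := by
          have : (j.1 + 1) * e = j.1 * e + e := by rw [Nat.succ_mul]
          omega
        have hpq' : p % n + 1 = q % n + 1 := hpq
        have hmod : p % n = q % n := by omega
        rcases le_total p q with hle | hle
        · have hdvd : n ∣ q - p := (Nat.modEq_iff_dvd' hle).mp hmod
          have : q - p = 0 := Nat.eq_zero_of_dvd_of_lt hdvd (by omega)
          omega
        · have hdvd : n ∣ p - q := (Nat.modEq_iff_dvd' hle).mp hmod.symm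
          have : p - q = 0 := Nat.eq_zero_of_dvd_of_lt hdvd (by omega)
          omega
      simp_rw [hcard]
      rw [Fin.sum_univ_eq_sum_range (fun j => min ((j + 1) * e) (n * s) - j * e)]
      have hmono : Monotone (fun j : ℕ => min (j * e) (n * s)) := fun a b hab =>
        min_le_min (Nat.mul_le_mul_right e hab) le_rfl
      have htel : ∑ i ∈ Finset.range r,
          (min ((i + 1) * e) (n * s) - min (i * e) (n * s))
          = min (r * e) (n * s) - min (0 * e) (n * s) := Finset.sum_range_tsub hmono r
      calc M = min (r * e) (n * s) - min (0 * e) (n * s) := by simp [hM]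
        _ = ∑ i ∈ Finset.range r,
            (min ((i + 1) * e) (n * s) - min (i * e) (n * s)) := htel.symm
        _ = ∑ i ∈ Finset.range r, (min ((i + 1) * e) (n * s) - i * e) :=
            Finset.sum_congr rfl fun i _ => by
              have h := Nat.mul_le_mul_right e (Nat.le_succ i); omega
  -- Compute sSup
  have hne : T.Nonempty := ⟨M, hmem⟩
  have hbdd : BddAbove T := ⟨M, fun m hm => hub m hm⟩
  have hsup : sSup T = M := le_antisymm (csSup_le hne hub) (le_csSup hbdd hmem)
  rw [hsup]
  have key : ∀ a b : ℕ, b - min a b = b - a := fun a b => by omega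
  exact key (r * e) (n * s)
end

section
/- Let n ≥ tk with t ≥ 1 and k ≥ 2. Every subset R ⊆ [n] of cardinality t(k-1)+1 contains a t-stable k-subset. -/
open Finset

private lemma stable_aux : ∀ n t k : ℕ, 1 ≤ t → 2 ≤ k → t * k ≤ n →
    ∀ R : Finset ℕ, R ⊆ Icc 1 n → R.card = t * (k - 1) + 1 →
    ∃ S ⊆ R, S.card = k ∧
      (∀ a ∈ S, ∀ b ∈ S, a ≠ b → t ≤ Nat.dist a b ∧ Nat.dist a b ≤ n - t) := by
  intro n
  induction n using Nat.strong_induction_on with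
  | _ n ih =>
    intro t k ht hk htk R hR hcard
    by_cases hn : n = t * k
    · -- tight case: pigeonhole on residues mod t
      subst hn
      have hmaps : ∀ x ∈ R, x % t ∈ range t := by
        intro x _; simpa using Nat.mod_lt x ht
      have hlt : (range t).card * (k - 1) < R.card := by
        rw [card_range, hcard]; omega
      obtain ⟨c, _, hfib⟩ :=
        Finset.exists_lt_card_fiber_of_mul_lt_card_of_maps_to hmaps hlt
      have hk' : k ≤ (R.filter (fun x => x % t = c)).card := by omega
      obtain ⟨S, hS, hScard⟩ := Finset.exists_subset_card_eq hk'
      refine ⟨S, hS.trans (filter_subset _ _), hScard, ?_⟩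
      have key : ∀ x y : ℕ, 1 ≤ x → y ≤ t * k → x < y → x % t = y % t →
          t ≤ y - x ∧ y - x ≤ t * k - t := by
        intro x y hx hy hxy hmod
        have hdvd : t ∣ y - x := (Nat.modEq_iff_dvd' hxy.le).mp hmod
        obtain ⟨j, hj⟩ := hdvd
        have hj1 : 1 ≤ j := by
          rcases Nat.eq_zero_or_pos j with h | h
          · subst h; simp at hj; omega
          · exact h
        constructor
        · have : t * 1 ≤ t * j := Nat.mul_le_mul_left t hj1
          omega
        · have hjk : j < k := by
            by_contra h
            have : t * k ≤ t * j := Nat.mul_le_mul_left t (not_lt.mp h)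
            omega
          have h2 : t * (j + 1) ≤ t * k := Nat.mul_le_mul_left t hjk
          rw [Nat.mul_add] at h2
          omega
      intro a ha b hb hab
      have haR : a ∈ R.filter (fun x => x % t = c) := hS ha
      have hbR : b ∈ R.filter (fun x => x % t = c) := hS hb
      simp only [mem_filter] at haR hbR
      have ha' := hR haR.1
      have hb' := hR hbR.1
      simp only [mem_Icc] at ha' hb'
      have hmod : a % t = b % t := by rw [haR.2, hbR.2]
      rcases lt_trichotomy a b with h | h | h
      · have := key a b ha'.1 hb'.2 h hmod
        simp only [Nat.dist]
        omega
      · exact absurd h hab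
      · have := key b a hb'.1 ha'.2 h hmod.symm
        simp only [Nat.dist]
        omega
    · -- n > t*k : delete a missing position and use induction
      have hlt : t * k < n := lt_of_le_of_ne htk (fun h => hn h.symm)
      have h2t : t * 2 ≤ n := le_trans (Nat.mul_le_mul_left t hk) htk
      have hmk : t * (k - 1) + t = t * k := by
        rw [← Nat.mul_succ]
        congr 1
        omega
      have hmlt : R.card < (Icc 1 n).card := by
        rw [Nat.card_Icc, hcard]
        omega
      have hne : R ≠ Icc 1 n := fun h => by rw [h] at hmlt; omega
      obtain ⟨z, hz, hzR⟩ := Finset.exists_of_ssubset (lt_of_le_of_ne hR hne)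
      simp only [mem_Icc] at hz
      set f : ℕ → ℕ := fun p => if p < z then p else p - 1 with hf
      have hinj : Set.InjOn f R := by
        intro a ha b hb hab
        have haz : a ≠ z := fun h => hzR (h ▸ ha)
        have hbz : b ≠ z := fun h => hzR (h ▸ hb)
        simp only [hf] at hab
        split_ifs at hab <;> omega
      have hR' : R.image f ⊆ Icc 1 (n - 1) := by
        intro q hq
        obtain ⟨p, hp, rfl⟩ := mem_image.mp hq
        have hp1 := hR hp
        simp only [mem_Icc] at hp1 ⊢
        have hpz : p ≠ z := fun h => hzR (h ▸ hp)
        simp only [hf]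
        split_ifs <;> omega
      have hcard' : (R.image f).card = t * (k - 1) + 1 := by
        rw [Finset.card_image_of_injOn hinj, hcard]
      obtain ⟨S', hS'sub, hS'card, hS'stab⟩ :=
        ih (n - 1) (by omega) t k ht hk (by omega) (R.image f) hR' hcard'
      set g : ℕ → ℕ := fun q => if q < z then q else q + 1 with hg
      have hgf : ∀ p ∈ R, g (f p) = p := by
        intro p hp
        have hpz : p ≠ z := fun h => hzR (h ▸ hp)
        have hp1 := hR hp
        simp only [mem_Icc] at hp1
        simp only [hf, hg]
        split_ifs <;> omega
      have hSR : ∀ q ∈ S', g q ∈ R := by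
        intro q hq
        obtain ⟨p, hp, rfl⟩ := mem_image.mp (hS'sub hq)
        rw [hgf p hp]
        exact hp
      refine ⟨S'.image g, ?_, ?_, ?_⟩
      · intro x hx
        obtain ⟨q, hq, rfl⟩ := mem_image.mp hx
        exact hSR q hq
      · rw [Finset.card_image_of_injOn, hS'card]
        intro a _ b _ hab
        simp only [hg] at hab
        split_ifs at hab <;> omega
      · intro a ha b hb hab
        obtain ⟨q, hq, rfl⟩ := mem_image.mp ha
        obtain ⟨q', hq', rfl⟩ := mem_image.mp hb
        have hne : q ≠ q' := fun h => hab (by rw [h])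
        obtain ⟨hd1, hd2⟩ := hS'stab q hq q' hq' hne
        have hq1 : q ∈ Icc 1 (n - 1) := hR' (hS'sub hq)
        have hq'1 : q' ∈ Icc 1 (n - 1) := hR' (hS'sub hq')
        simp only [mem_Icc] at hq1 hq'1
        simp only [Nat.dist] at hd1 hd2 ⊢
        simp only [hg]
        split_ifs <;> omega

/-- Every subset `R ⊆ [n]` of cardinality `t(k-1)+1` contains a `t`-stable
`k`-subset, provided `n ≥ tk` (with `t ≥ 1`, `k ≥ 2`). A set `S ⊆ [n]` is
`t`-stable iff `t ≤ |a-b| ≤ n-t` for all distinct `a, b ∈ S`. -/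
theorem exists_t_stable_subset (n t k : ℕ) (ht : 1 ≤ t) (hk : 2 ≤ k)
    (htk : t * k ≤ n) (R : Finset ℕ) (hR : R ⊆ Icc 1 n)
    (hcard : R.card = t * (k - 1) + 1) :
    ∃ S ⊆ R, S.card = k ∧
      (∀ a ∈ S, ∀ b ∈ S, a ≠ b → t ≤ Nat.dist a b ∧ Nat.dist a b ≤ n - t) := by
  exact stable_aux n t k ht hk htk R hR hcard
end

section
/- (Kneser's conjecture / Lovász's theorem) For n ≥ 2k ≥ 4, the chromatic number of the Kneser graph on the k-subsets of [n], where two subsets are adjacent iff disjoint, equals n - 2k + 2. -/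
/-!
The upper bound colours a `k`-set by its least element, capped at `n - 2k + 1`: all `k`-sets
with the capped colour lie in a set of `2k - 1` elements, so no two of them are disjoint.

The lower bound is Matoušek's combinatorial proof. A proper colouring with `m` colours yields a
labelling of the nonzero sign vectors `x ∈ {-, 0, +}ⁿ` by integers of absolute value at most
`2k - 2 + m` which is antipodal and has no complementary edge `x ≼ y`, `ℓ x = -ℓ y`: a vector
with small support gets `±|supp x|`, one with large support gets `±(2k - 2 + r)`, where `r`
is one more than the largest colour of a `k`-subset of `x⁺` or of `x⁻`, whichever is larger.
By the octahedral Tucker lemma, `n ≤ 2k - 2 + m`.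

Tucker's lemma follows from Ky Fan's parity statement: the number of maximal chains of
nonzero sign vectors whose labels, sorted by absolute value, alternate in sign starting with
a positive one is odd. This goes by induction on `n`. Restrict to the hemisphere `xₙ ≥ 0` and
count incidences between full chains (rooms) and positively alternating chains one element short
(doors): a room has an odd number of doors iff it is alternating, and a door lies in two rooms,
except on the equator `xₙ = 0`, where it lies in one. Negation matches the alternating chains
outside the hemisphere with the negatively alternating ones inside it.
-/

open Finset

namespace Kneser

open scoped Classical

def SignAlternating : Bool → List ℤ → Prop
  | _, [] => True
  | b, a :: l => (0 < a ↔ b) ∧ SignAlternating (!b) l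

theorem countP_signAlternating_erase_mod_two {l : List ℤ} (hl : l.Nodup) (b : Bool) :
    l.countP (fun a => SignAlternating b (l.erase a)) % 2 =
      ((if SignAlternating b l then 1 else 0) + if SignAlternating (!b) l then 1 else 0) % 2 := by
  induction l generalizing b with
  | nil => simp [SignAlternating]
  | cons a t ih =>
    obtain ⟨hat, ht⟩ := List.nodup_cons.1 hl
    have herase : ∀ x ∈ t, (a :: t).erase x = a :: t.erase x := fun x hx =>
      List.erase_cons_tail (by simpa using (ne_of_mem_of_not_mem hx hat).symm)
    rw [List.countP_cons, List.erase_cons_head,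
      List.countP_congr (fun x hx => by rw [herase x hx])]
    have ih' := ih ht (!b)
    rw [Bool.not_not] at ih'
    by_cases hab : (0 < a ↔ b)
    · have hcons : ∀ u, SignAlternating b (a :: u) ↔ SignAlternating (!b) u := fun u => by
        simp [SignAlternating, hab]
      have hcons' : ∀ u, ¬ SignAlternating (!b) (a :: u) := fun u => by
        cases b <;> simp_all [SignAlternating]
      simp only [hcons, hcons', if_false, add_zero, decide_eq_true_eq]
      split_ifs at ih' ⊢ <;> omega
    · have hcons : ∀ u, ¬ SignAlternating b (a :: u) := fun u => by
        simp [SignAlternating, hab]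
      have hcons' : ∀ u, SignAlternating (!b) (a :: u) ↔ SignAlternating b u := fun u => by
        cases b <;> simp_all [SignAlternating]
      simp [hcons, hcons']

def IsAlternating (b : Bool) (M : Multiset ℤ) : Prop :=
  ∃ l : List ℤ, (l : Multiset ℤ) = M ∧ l.Pairwise (fun a a' => |a| < |a'|) ∧ SignAlternating b l

theorem IsAlternating.nodup_map_abs {b : Bool} {M : Multiset ℤ} (h : IsAlternating b M) :
    (M.map abs).Nodup := by
  obtain ⟨l, rfl, hl, -⟩ := h
  exact Multiset.coe_nodup.2 (List.pairwise_map.2 (hl.imp ne_of_lt))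

theorem isAlternating_coe_iff {l : List ℤ} (hl : l.Pairwise (fun a a' => |a| < |a'|)) (b : Bool) :
    IsAlternating b l ↔ SignAlternating b l := by
  refine ⟨fun ⟨l', hl', hsorted, halt⟩ => ?_, fun h => ⟨l, rfl, hl, h⟩⟩
  have : Std.Antisymm (fun a a' : ℤ => |a| < |a'|) :=
    ⟨fun _ _ h h' => absurd (h.trans h') (lt_irrefl _)⟩
  rwa [(Multiset.coe_eq_coe.1 hl').eq_of_pairwise' hsorted hl] at halt

theorem exists_pairwise_abs_lt {M : Multiset ℤ} (h : (M.map abs).Nodup) :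
    ∃ l : List ℤ, (l : Multiset ℤ) = M ∧ l.Pairwise (fun a a' => |a| < |a'|) := by
  set l := M.toList.mergeSort (fun a a' => |a| ≤ |a'|)
  have hlM : (l : Multiset ℤ) = M := by
    rw [Multiset.coe_eq_coe.2 (List.mergeSort_perm _ _), Multiset.coe_toList]
  have hle : l.Pairwise (fun a a' => |a| ≤ |a'|) := by
    simpa using List.pairwise_mergeSort (le := fun a a' : ℤ => |a| ≤ |a'|)
      (fun a b c hab hbc => by simp only [decide_eq_true_eq] at *; exact hab.trans hbc)
      (fun a b => by simpa using le_total _ _) M.toList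
  have hne : l.Pairwise (fun a a' => |a| ≠ |a'|) := by
    rw [← hlM, Multiset.map_coe, Multiset.coe_nodup] at h
    exact List.pairwise_map.1 h
  exact ⟨l, hlM, (hle.and hne).imp fun h => lt_of_le_of_ne h.1 h.2⟩

theorem count_eq_two_of_isAlternating_erase {M : Multiset ℤ} (hneg : ∀ a ∈ M, -a ∉ M)
    (hM : ¬ (M.map abs).Nodup) {a : ℤ} {b : Bool} (ha : IsAlternating b (M.erase a)) :
    M.count a = 2 := by
  have haM : a ∈ M := by
    by_contra h
    rw [Multiset.erase_of_notMem h] at ha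
    exact hM ha.nodup_map_abs
  have hnd := ha.nodup_map_abs
  rw [Multiset.map_erase_of_mem _ _ haM] at hnd
  have hcount : (M.map abs).count |a| = M.count a := by
    rw [Multiset.count_map, Multiset.count_eq_card_filter_eq]
    congr 1
    refine Multiset.filter_congr fun x hx => ⟨fun h => ?_, fun h => by rw [h]⟩
    rcases abs_eq_abs.1 h with h | h
    · exact h
    · exact absurd (by rw [h, neg_neg]; exact hx) (hneg a haM)
  rw [← Multiset.cons_erase (Multiset.mem_map_of_mem abs haM), Multiset.nodup_cons] at hM
  have hmem : |a| ∈ (M.map abs).erase |a| := by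
    by_contra h
    exact hM ⟨h, hnd⟩
  have h1 := Multiset.count_eq_one_of_mem hnd hmem
  rw [Multiset.count_erase_self] at h1
  omega

theorem countP_isAlternating_erase_mod_two {M : Multiset ℤ} (hneg : ∀ a ∈ M, -a ∉ M) :
    M.countP (fun a => IsAlternating true (M.erase a)) % 2 =
      ((if IsAlternating true M then 1 else 0) + if IsAlternating false M then 1 else 0) % 2 := by
  by_cases hnd : (M.map abs).Nodup
  · obtain ⟨l, rfl, hl⟩ := exists_pairwise_abs_lt hnd
    have herase : ∀ a, IsAlternating true ((l : Multiset ℤ).erase a) ↔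
        SignAlternating true (l.erase a) := fun a => by
      rw [Multiset.coe_erase, isAlternating_coe_iff (hl.sublist (l.erase_sublist)) _]
    rw [Multiset.coe_countP, isAlternating_coe_iff hl, isAlternating_coe_iff hl]
    simp only [herase]
    exact countP_signAlternating_erase_mod_two
      (hl.imp fun h => ne_of_apply_ne abs (ne_of_lt h)) true
  -- Erasing can only leave an alternating multiset if it removes one of exactly two equal
  -- entries, and then both copies do.
  · have hP : ¬ IsAlternating true M := fun h => hnd h.nodup_map_abs
    have hN : ¬ IsAlternating false M := fun h => hnd h.nodup_map_abs
    rw [if_neg hP, if_neg hN, ← Nat.even_iff, Multiset.countP_eq_card_filter,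
      ← Multiset.toFinset_sum_count_eq]
    refine Finset.even_sum _ fun a ha => ?_
    have hPa := (Multiset.mem_filter.1 (Multiset.mem_toFinset.1 ha)).2
    rw [Multiset.count_filter_of_pos (p := fun a => IsAlternating true (M.erase a)) hPa,
      count_eq_two_of_isAlternating_erase hneg hnd hPa]
    exact even_two

theorem SignAlternating.map_neg {b : Bool} {l : List ℤ} (h : SignAlternating b l) (h0 : 0 ∉ l) :
    SignAlternating (!b) (l.map Neg.neg) := by
  induction l generalizing b with
  | nil => trivial
  | cons a t ih =>
    obtain ⟨ha, ht⟩ := h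
    have ha0 : a ≠ 0 := fun h => h0 (h ▸ List.mem_cons_self)
    refine ⟨?_, ih ht (fun h => h0 (List.mem_cons_of_mem a h))⟩
    cases b <;> simp at ha ⊢ <;> omega

theorem IsAlternating.map_neg {b : Bool} {M : Multiset ℤ} (h : IsAlternating b M) (h0 : 0 ∉ M) :
    IsAlternating (!b) (M.map Neg.neg) := by
  obtain ⟨l, rfl, hl, halt⟩ := h
  exact ⟨l.map Neg.neg, rfl, List.pairwise_map.2 (by simpa using hl), halt.map_neg h0⟩

def Extends {ι : Type*} (x y : ι → SignType) : Prop := ∀ i, x i ≠ 0 → y i = x i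

local infix:50 " ≼ " => Extends

section SignVector

variable {ι : Type*} {x y z : ι → SignType}

theorem Extends.refl (x : ι → SignType) : x ≼ x := fun _ _ => rfl

instance : Std.Refl (Extends (ι := ι)) := ⟨Extends.refl⟩

theorem Extends.trans (hxy : x ≼ y) (hyz : y ≼ z) : x ≼ z := fun i hi => by
  rw [hyz i (by rwa [hxy i hi]), hxy i hi]

theorem zero_extends (x : ι → SignType) : 0 ≼ x := fun _ hi => absurd rfl hi

theorem Extends.neg (h : x ≼ y) : -x ≼ -y := fun i hi => by
  simp [h i (by simpa using hi)]

def IsSignChain (C : Finset (ι → SignType)) : Prop :=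
  0 ∉ C ∧ IsChain Extends (C : Set (ι → SignType))

variable {C D : Finset (ι → SignType)}

namespace IsSignChain

theorem ne_zero (hC : IsSignChain C) (hx : x ∈ C) : x ≠ 0 := fun h => hC.1 (h ▸ hx)

theorem total (hC : IsSignChain C) (hx : x ∈ C) (hy : y ∈ C) : x ≼ y ∨ y ≼ x :=
  hC.2.total hx hy

theorem mono (hC : IsSignChain C) (hD : D ⊆ C) : IsSignChain D :=
  ⟨fun h => hC.1 (hD h), hC.2.mono (by simpa using hD)⟩

theorem apply_eq_of_ne_zero (hC : IsSignChain C) (hx : x ∈ C) (hy : y ∈ C) {i : ι}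
    (hxi : x i ≠ 0) (hyi : y i ≠ 0) : x i = y i := by
  rcases hC.total hx hy with h | h
  · exact (h i hxi).symm
  · exact h i hyi

end IsSignChain

variable [Fintype ι]

def supp (x : ι → SignType) : Finset ι := {i | x i ≠ 0}

@[simp] theorem mem_supp {i : ι} : i ∈ supp x ↔ x i ≠ 0 := by simp [supp]

@[simp] theorem supp_neg (x : ι → SignType) : supp (-x) = supp x := by ext; simp

@[simp] theorem supp_zero : supp (0 : ι → SignType) = ∅ := by ext; simp

theorem supp_nonempty_iff : (supp x).Nonempty ↔ x ≠ 0 := by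
  simp [Finset.Nonempty, funext_iff]

theorem Extends.supp_subset (h : x ≼ y) : supp x ⊆ supp y := fun i hi => by
  rw [mem_supp] at hi ⊢
  rwa [h i hi]

theorem Extends.eq_of_card_supp_le (h : x ≼ y) (hcard : #(supp y) ≤ #(supp x)) : x = y := by
  have hsupp := eq_of_subset_of_card_le h.supp_subset hcard
  funext i
  by_cases hi : x i = 0
  · have : i ∉ supp y := hsupp ▸ by simpa using hi
    simp_all
  · exact (h i hi).symm

theorem extends_of_total_of_card_supp_le (h : x ≼ y ∨ y ≼ x) (hc : #(supp x) ≤ #(supp y)) :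
    x ≼ y :=
  h.elim id fun hyx => hyx.eq_of_card_supp_le hc ▸ Extends.refl y

namespace IsSignChain

open scoped Pointwise in
theorem neg (hC : IsSignChain C) : IsSignChain (-C) := by
  refine ⟨fun h => hC.1 (by simpa using h), fun x hx y hy _ => ?_⟩
  simp only [coe_neg, Set.mem_neg] at hx hy
  rcases hC.total hx hy with h | h
  · exact Or.inl (by simpa using h.neg)
  · exact Or.inr (by simpa using h.neg)

theorem extends_of_card_supp_le (hC : IsSignChain C) (hx : x ∈ C) (hy : y ∈ C)
    (h : #(supp x) ≤ #(supp y)) : x ≼ y :=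
  extends_of_total_of_card_supp_le (hC.total hx hy) h

theorem injOn_card_supp (hC : IsSignChain C) :
    Set.InjOn (fun x => #(supp x)) (C : Set (ι → SignType)) := fun _ hx _ hy h =>
  (hC.extends_of_card_supp_le hx hy h.le).eq_of_card_supp_le h.ge

theorem card_supp_mem_Icc (hC : IsSignChain C) (hx : x ∈ C) :
    #(supp x) ∈ Icc 1 (Fintype.card ι) :=
  mem_Icc.2 ⟨card_pos.2 (supp_nonempty_iff.2 (hC.ne_zero hx)), card_le_univ _⟩

theorem exists_supp_eq_univ (hC : IsSignChain C) (hcard : #C = Fintype.card ι)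
    (hι : 0 < Fintype.card ι) : ∃ x ∈ C, supp x = univ := by
  have himage : C.image (fun x => #(supp x)) = Icc 1 (Fintype.card ι) :=
    eq_of_subset_of_card_le (fun _ hs => by
        obtain ⟨x, hx, rfl⟩ := mem_image.1 hs
        exact hC.card_supp_mem_Icc hx)
      (by rw [Nat.card_Icc, card_image_of_injOn hC.injOn_card_supp, hcard]; omega)
  obtain ⟨x, hx, hcx⟩ := mem_image.1 (himage ▸ mem_Icc.2 ⟨hι, le_rfl⟩)
  exact ⟨x, hx, eq_univ_of_card _ hcx⟩

theorem exists_missing_card (hD : IsSignChain D) (hcard : #D + 1 = Fintype.card ι) :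
    ∃ s ∈ Icc 1 (Fintype.card ι), (∀ x ∈ D, #(supp x) ≠ s) ∧
      ∀ t ∈ Icc 1 (Fintype.card ι), t ≠ s → ∃ x ∈ D, #(supp x) = t := by
  have hsub : D.image (fun x => #(supp x)) ⊆ Icc 1 (Fintype.card ι) := fun _ h => by
    obtain ⟨x, hx, rfl⟩ := mem_image.1 h
    exact hD.card_supp_mem_Icc hx
  have hcard' : #(Icc 1 (Fintype.card ι) \ D.image (fun x => #(supp x))) = 1 := by
    rw [card_sdiff_of_subset hsub, Nat.card_Icc, card_image_of_injOn hD.injOn_card_supp]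
    omega
  obtain ⟨s, hs⟩ := card_eq_one.1 hcard'
  have hmem : ∀ t, t ∈ Icc 1 (Fintype.card ι) ∧ (∀ x ∈ D, #(supp x) ≠ t) ↔ t = s := fun t => by
    rw [← mem_singleton, ← hs]
    simp
  obtain ⟨hsIcc, hsD⟩ := (hmem s).2 rfl
  refine ⟨s, hsIcc, hsD, fun t ht hts => ?_⟩
  by_contra! h
  exact hts ((hmem t).1 ⟨ht, h⟩)

variable {s : ℕ}

theorem insert_iff_of_missing (hD : IsSignChain D) (hs : 1 ≤ s) (hsD : ∀ x ∈ D, #(supp x) ≠ s)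
    (hDs : ∀ t ∈ Icc 1 (Fintype.card ι), t ≠ s → ∃ x ∈ D, #(supp x) = t) :
    y ∉ D ∧ IsSignChain (insert y D) ↔ #(supp y) = s ∧ ∀ x ∈ D, x ≼ y ∨ y ≼ x := by
  constructor
  · rintro ⟨hyD, hyC⟩
    refine ⟨by_contra fun hne => ?_, fun x hx =>
      hyC.total (mem_insert_of_mem hx) (mem_insert_self y D)⟩
    obtain ⟨x, hx, hxy⟩ := hDs _ (hyC.card_supp_mem_Icc (mem_insert_self y D)) hne
    exact hyD (hyC.injOn_card_supp (mem_insert_of_mem hx) (mem_insert_self y D) hxy ▸ hx)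
  · rintro ⟨hys, hcomp⟩
    have hy0 : y ≠ 0 := by
      rintro rfl
      simp [supp] at hys
      omega
    refine ⟨fun hyD => hsD y hyD hys, ?_, ?_⟩
    · rw [mem_insert, not_or]
      exact ⟨hy0.symm, hD.1⟩
    · rw [coe_insert]
      exact hD.2.insert fun x hx _ => (hcomp x hx).symm

end IsSignChain

end SignVector

section Extensions

variable {ι : Type*} [DecidableEq ι] {w y z : ι → SignType}

theorem extends_update_self {t : ι} (ht : w t = 0) (σ : SignType) : w ≼ Function.update w t σ :=
  fun i hi => Function.update_of_ne (by rintro rfl; exact hi ht) _ _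

variable [Fintype ι] {D : Finset (ι → SignType)} {s : ℕ}

theorem eq_update_of_supp_sdiff_eq (hwy : w ≼ y) (hyz : y ≼ z) {t : ι}
    (ht : supp y \ supp w = {t}) : y = Function.update w t (z t) := by
  obtain ⟨hty, -⟩ := mem_sdiff.1 (ht ▸ mem_singleton_self t)
  funext i
  by_cases hit : i = t
  · subst hit
    rw [Function.update_self, hyz i (mem_supp.1 hty)]
  · rw [Function.update_of_ne hit]
    by_cases hwi : w i = 0
    · have : i ∉ supp y := fun hiy =>
        hit (mem_singleton.1 (ht ▸ mem_sdiff.2 ⟨hiy, by simpa using hwi⟩))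
      rw [hwi]
      simpa using this
    · exact hwy i hwi

theorem card_extends_between (hwz : w ≼ z) :
    #{y | w ≼ y ∧ y ≼ z ∧ #(supp y) = #(supp w) + 1} = #(supp z \ supp w) := by
  symm
  refine card_bij (fun t _ => Function.update w t (z t)) (fun t ht => ?_) (fun t ht t' _ h => ?_)
    (fun y hy => ?_)
  · obtain ⟨htz, htw⟩ := mem_sdiff.1 ht
    rw [mem_supp, not_not] at htw
    have hsupp : supp (Function.update w t (z t)) = insert t (supp w) := by
      ext i
      by_cases hi : i = t
      · subst hi; simpa using htz
      · simp [hi]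
    refine mem_filter.2 ⟨mem_univ _, extends_update_self htw _, fun i hi => ?_, ?_⟩
    · by_cases hit : i = t
      · subst hit; simp
      · rw [Function.update_of_ne hit] at hi ⊢
        exact hwz i hi
    · rw [hsupp, card_insert_of_notMem (by simpa using htw)]
  · by_contra hne
    have := congrFun h t
    rw [Function.update_self, Function.update_of_ne hne] at this
    exact (mem_supp.1 (mem_sdiff.1 ht).1) (this.trans (by simpa using (mem_sdiff.1 ht).2))
  · obtain ⟨hwy, hyz, hcard⟩ := (mem_filter.1 hy).2
    obtain ⟨t, ht⟩ : ∃ t, supp y \ supp w = {t} := card_eq_one.1 (by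
      rw [card_sdiff_of_subset hwy.supp_subset]; omega)
    obtain ⟨hty, htw⟩ := mem_sdiff.1 (ht ▸ mem_singleton_self t)
    exact ⟨t, mem_sdiff.2 ⟨hyz.supp_subset hty, htw⟩, (eq_update_of_supp_sdiff_eq hwy hyz ht).symm⟩

theorem extends_and_ne_iff {t : ι} (hw : supp w = univ.erase t) :
    w ≼ y ∧ y ≠ w ↔ y = Function.update w t 1 ∨ y = Function.update w t (-1) := by
  have hwt : w t = 0 := not_not.1 (mem_supp.not.1 (by simp [hw]))
  have hwi : ∀ i, i ≠ t → w i ≠ 0 := fun i hi => mem_supp.1 (hw ▸ mem_erase.2 ⟨hi, mem_univ i⟩)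
  constructor
  · rintro ⟨hwy, hyw⟩
    have hy : y = Function.update w t (y t) := funext fun i => by
      by_cases hi : i = t
      · subst hi; simp
      · rw [Function.update_of_ne hi, hwy i (hwi i hi)]
    have hyt : y t ≠ 0 := fun h => hyw (by rw [hy, h, ← hwt, Function.update_eq_self])
    rw [hy]
    rcases hσ : y t with _ | _ | _
    · exact absurd hσ hyt
    · exact Or.inr rfl
    · exact Or.inl rfl
  · rintro (h | h) <;> subst h <;> refine ⟨extends_update_self hwt _, fun h => ?_⟩ <;>
      have := congrFun h t <;> rw [Function.update_self, hwt] at this <;>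
      exact absurd this (by decide)

theorem exists_supp_eq_univ_erase (hw : #(supp w) + 1 = Fintype.card ι) :
    ∃ t, supp w = univ.erase t := by
  obtain ⟨t, ht⟩ := card_eq_one.1 (show #(univ \ supp w) = 1 by
    rw [card_sdiff_of_subset (subset_univ _), card_univ]
    omega)
  exact ⟨t, by rw [← sdiff_singleton_eq_erase, ← ht, Finset.sdiff_sdiff_eq_self (subset_univ _)]⟩

theorem card_extends_ne_of_supp_eq_univ_erase {t p : ι} (hw : supp w = univ.erase t)
    (hwp : w p ≠ -1) :
    #{y | (w ≼ y ∧ y ≠ w) ∧ y p ≠ -1} = if t = p then 1 else 2 := by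
  have hwt : w t = 0 := not_not.1 (mem_supp.not.1 (by simp [hw]))
  simp only [extends_and_ne_iff hw]
  split_ifs with htp
  · subst htp
    rw [card_eq_one]
    refine ⟨Function.update w t 1, ?_⟩
    ext y
    simp only [mem_filter, mem_univ, true_and, mem_singleton]
    constructor
    · rintro ⟨rfl | rfl, h⟩
      · rfl
      · simp at h
    · rintro rfl
      simp
  · rw [card_eq_two]
    refine ⟨Function.update w t 1, Function.update w t (-1), fun h => ?_, ?_⟩
    · have := congrFun h t
      simp at this
    · ext y
      simp only [mem_filter, mem_univ, true_and, mem_insert, mem_singleton]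
      refine ⟨fun h => h.1, fun h => ⟨h, ?_⟩⟩
      rcases h with rfl | rfl <;> rwa [Function.update_of_ne (Ne.symm htp)]

namespace IsSignChain

variable {p : ι}

theorem card_extensions_of_lt (hD : IsSignChain D) (hp : ∀ x ∈ D, x p ≠ -1)
    (hvalid : ∀ y, y ∉ D ∧ IsSignChain (insert y D) ↔ #(supp y) = s ∧ ∀ x ∈ D, x ≼ y ∨ y ≼ x)
    (hsD : ∀ x ∈ D, #(supp x) ≠ s) (hw : w = 0 ∨ w ∈ D) (hws : #(supp w) + 1 = s)
    (hz : z ∈ D) (hzs : #(supp z) = s + 1) :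
    #{y | y ∉ D ∧ IsSignChain (insert y D) ∧ y p ≠ -1} = 2 := by
  have hlow : ∀ x ∈ D, #(supp x) < s → x ≼ w := fun x hx hxs => by
    have := (mem_Icc.1 (hD.card_supp_mem_Icc hx)).1
    rcases hw with rfl | hwD
    · rw [supp_zero, card_empty] at hws
      omega
    · exact hD.extends_of_card_supp_le hx hwD (by omega)
  have hwz : w ≼ z := by
    rcases hw with rfl | hwD
    · exact zero_extends z
    · exact hD.extends_of_card_supp_le hwD hz (by omega)
  have hset : ({y | y ∉ D ∧ IsSignChain (insert y D) ∧ y p ≠ -1} : Finset (ι → SignType)) =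
      ({y | w ≼ y ∧ y ≼ z ∧ #(supp y) = #(supp w) + 1} : Finset (ι → SignType)) := by
    ext y
    simp only [mem_filter, mem_univ, true_and]
    rw [← and_assoc, hvalid]
    constructor
    · rintro ⟨⟨hys, hcomp⟩, -⟩
      refine ⟨?_, extends_of_total_of_card_supp_le (hcomp z hz).symm (by omega), by omega⟩
      rcases hw with rfl | hwD
      · exact zero_extends y
      · exact extends_of_total_of_card_supp_le (hcomp w hwD) (by omega)
    · rintro ⟨hwy, hyz, hys⟩
      refine ⟨⟨by omega, fun x hx => ?_⟩, fun hyp => hp z hz ?_⟩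
      · rcases lt_or_gt_of_ne (hsD x hx) with h | h
        · exact Or.inl ((hlow x hx h).trans hwy)
        · exact Or.inr (hyz.trans (hD.extends_of_card_supp_le hz hx (by omega)))
      · rw [hyz p (by rw [hyp]; decide), hyp]
  rw [hset, card_extends_between hwz, card_sdiff_of_subset hwz.supp_subset]
  omega

theorem card_extensions_of_eq (hD : IsSignChain D) (hp : ∀ x ∈ D, x p ≠ -1)
    (hvalid : ∀ y, y ∉ D ∧ IsSignChain (insert y D) ↔
      #(supp y) = Fintype.card ι ∧ ∀ x ∈ D, x ≼ y ∨ y ≼ x)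
    (hsD : ∀ x ∈ D, #(supp x) ≠ Fintype.card ι) (hw : w = 0 ∨ w ∈ D)
    (hws : #(supp w) + 1 = Fintype.card ι) :
    #{y | y ∉ D ∧ IsSignChain (insert y D) ∧ y p ≠ -1} = if ∀ x ∈ D, x p = 0 then 1 else 2 := by
  obtain ⟨t, hwt⟩ := exists_supp_eq_univ_erase hws
  have hlow : ∀ x ∈ D, x ≼ w := fun x hx => by
    have := mem_Icc.1 (hD.card_supp_mem_Icc hx)
    have := hsD x hx
    rcases hw with rfl | hwD
    · rw [supp_zero, card_empty] at hws
      omega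
    · exact hD.extends_of_card_supp_le hx hwD (by omega)
  have hset : ({y | y ∉ D ∧ IsSignChain (insert y D) ∧ y p ≠ -1} : Finset (ι → SignType)) =
      ({y | (w ≼ y ∧ y ≠ w) ∧ y p ≠ -1} : Finset (ι → SignType)) := by
    ext y
    simp only [mem_filter, mem_univ, true_and]
    rw [← and_assoc, hvalid]
    refine and_congr_left fun _ => ⟨fun ⟨hys, hcomp⟩ => ⟨?_, ?_⟩, fun ⟨hwy, hyw⟩ => ⟨?_, ?_⟩⟩
    · rcases hw with rfl | hwD
      · exact zero_extends y
      · exact extends_of_total_of_card_supp_le (hcomp w hwD) (by omega)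
    · rintro rfl
      omega
    · by_contra hne
      exact hyw (hwy.eq_of_card_supp_le (by have := card_le_univ (supp y); omega)).symm
    · exact fun x hx => Or.inl ((hlow x hx).trans hwy)
  have hwp : w p ≠ -1 := by
    rcases hw with rfl | hwD
    · simp
    · exact hp w hwD
  have hbdry : (∀ x ∈ D, x p = 0) ↔ t = p := by
    refine ⟨fun h => by_contra fun htp => ?_, ?_⟩
    · have hpw : p ∈ supp w := hwt ▸ mem_erase.2 ⟨Ne.symm htp, mem_univ p⟩
      exact mem_supp.1 hpw (h w (hw.resolve_left fun h0 => by simp [h0] at hpw))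
    · rintro rfl x hx
      by_contra h
      have : t ∈ supp w := mem_supp.2 (hlow x hx t h ▸ h)
      simp [hwt] at this
  rw [hset, card_extends_ne_of_supp_eq_univ_erase hwt hwp, if_congr hbdry rfl rfl]

theorem card_extensions (hD : IsSignChain D) (hcard : #D + 1 = Fintype.card ι)
    (hp : ∀ x ∈ D, x p ≠ -1) :
    #{y | y ∉ D ∧ IsSignChain (insert y D) ∧ y p ≠ -1} = if ∀ x ∈ D, x p = 0 then 1 else 2 := by
  -- An extension fills the one support size `s` missing from `D`, between the neighbours `w`
  -- (of size `s - 1`, or `0`) and `z` (of size `s + 1`, unless `s` is maximal).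
  obtain ⟨s, hs, hsD, hDs⟩ := hD.exists_missing_card hcard
  have hvalid := fun y => hD.insert_iff_of_missing (y := y) (mem_Icc.1 hs).1 hsD hDs
  obtain ⟨w, hw, hws⟩ : ∃ w, (w = 0 ∨ w ∈ D) ∧ #(supp w) + 1 = s := by
    rcases (mem_Icc.1 hs).1.eq_or_lt with h | h
    · exact ⟨0, Or.inl rfl, by simp [← h]⟩
    · have := (mem_Icc.1 hs).2
      obtain ⟨w, hw, hws⟩ := hDs (s - 1) (mem_Icc.2 ⟨by omega, by omega⟩) (by omega)
      exact ⟨w, Or.inr hw, by omega⟩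
  rcases (mem_Icc.1 hs).2.lt_or_eq with hlt | rfl
  · obtain ⟨z, hz, hzs⟩ := hDs (s + 1) (mem_Icc.2 ⟨by omega, hlt⟩) (by omega)
    obtain ⟨x, hx, hxs⟩ := hDs _ (mem_Icc.2 ⟨by omega, le_rfl⟩) hlt.ne'
    rw [card_extensions_of_lt hD hp hvalid hsD hw hws hz hzs,
      if_neg fun h => mem_supp.1 ((eq_univ_of_card _ hxs).symm ▸ mem_univ p) (h x hx)]
  · exact card_extensions_of_eq hD hp hvalid hsD hw hws

end IsSignChain

end Extensions

theorem sum_card_erase_mem_eq_sum_card_insert_mem {α : Type*} [Fintype α] [DecidableEq α]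
    (R D : Finset (Finset α)) :
    ∑ C ∈ R, #{x ∈ C | C.erase x ∈ D} = ∑ B ∈ D, #{y | y ∉ B ∧ insert y B ∈ R} := by
  rw [← card_sigma, ← card_sigma]
  refine card_nbij' (fun q => ⟨q.1.erase q.2, q.2⟩) (fun q => ⟨insert q.2 q.1, q.2⟩) ?_ ?_ ?_ ?_
  · rintro ⟨C, x⟩ h
    simp only [coe_sigma, Set.mem_sigma_iff, mem_coe, mem_filter, mem_univ, true_and] at h ⊢
    exact ⟨h.2.2, notMem_erase x C, by rw [insert_erase h.2.1]; exact h.1⟩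
  · rintro ⟨B, y⟩ h
    simp only [coe_sigma, Set.mem_sigma_iff, mem_coe, mem_filter, mem_univ, true_and] at h ⊢
    exact ⟨h.2.2, mem_insert_self y B, by rw [erase_insert h.2.1]; exact h.1⟩
  · rintro ⟨C, x⟩ h
    simp only [coe_sigma, Set.mem_sigma_iff, mem_coe, mem_filter] at h
    simp [insert_erase h.2.1]
  · rintro ⟨B, y⟩ h
    simp only [coe_sigma, Set.mem_sigma_iff, mem_coe, mem_filter, mem_univ, true_and] at h
    simp [erase_insert h.2.1]

section Labelling

variable {ι : Type*}

def IsAntipodal (ℓ : (ι → SignType) → ℤ) : Prop := ∀ x, x ≠ 0 → ℓ (-x) = -ℓ x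

/-- For `y = x` this says that nonzero vectors get nonzero labels. -/
def NoComplementaryEdge (ℓ : (ι → SignType) → ℤ) : Prop := ∀ x y, x ≠ 0 → x ≼ y → ℓ x ≠ -ℓ y

variable {ℓ : (ι → SignType) → ℤ} {C : Finset (ι → SignType)}

theorem NoComplementaryEdge.ne_zero (hℓ : NoComplementaryEdge ℓ) {x : ι → SignType} (hx : x ≠ 0) :
    ℓ x ≠ 0 := fun h => hℓ x x hx (Extends.refl x) (by rw [h, neg_zero])

theorem IsSignChain.neg_notMem_labels (hC : IsSignChain C) (hℓ : NoComplementaryEdge ℓ) :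
    ∀ a ∈ C.val.map ℓ, -a ∉ C.val.map ℓ := by
  simp only [Multiset.mem_map, mem_val]
  rintro _ ⟨x, hx, rfl⟩ ⟨y, hy, hxy⟩
  rcases hC.total hx hy with h | h
  · exact hℓ x y (hC.ne_zero hx) h (by rw [hxy, neg_neg])
  · exact hℓ y x (hC.ne_zero hy) h hxy

theorem IsSignChain.zero_notMem_labels (hC : IsSignChain C) (hℓ : NoComplementaryEdge ℓ) :
    0 ∉ C.val.map ℓ := fun h => hC.neg_notMem_labels hℓ 0 h (by rwa [neg_zero])

variable [Fintype ι]

open scoped Pointwise in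
theorem IsSignChain.labels_neg (hC : IsSignChain C) (hℓ : IsAntipodal ℓ) :
    (-C).val.map ℓ = (C.val.map ℓ).map Neg.neg := by
  rw [neg_def, image_val_of_injOn neg_injective.injOn, Multiset.map_map, Multiset.map_map]
  exact Multiset.map_congr rfl fun x hx => hℓ x (hC.ne_zero hx)

theorem IsSignChain.card_alternating_erase_mod_two (hC : IsSignChain C)
    (hℓ : NoComplementaryEdge ℓ) :
    #{x ∈ C | IsAlternating true ((C.erase x).val.map ℓ)} % 2 =
      ((if IsAlternating true (C.val.map ℓ) then 1 else 0) +
        if IsAlternating false (C.val.map ℓ) then 1 else 0) % 2 := by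
  rw [← countP_isAlternating_erase_mod_two (hC.neg_notMem_labels hℓ), Multiset.countP_map,
    card_def, filter_val]
  congr 2
  refine Multiset.filter_congr fun x hx => ?_
  rw [erase_val, Multiset.map_erase_of_mem _ _ hx]

end Labelling

section Hemisphere

variable {ι : Type*} [Fintype ι] [DecidableEq ι] {ℓ : (ι → SignType) → ℤ} (p : ι)

noncomputable def hemisphereRooms : Finset (Finset (ι → SignType)) :=
  {C | IsSignChain C ∧ #C = Fintype.card ι ∧ ∀ x ∈ C, x p ≠ -1}

noncomputable def hemisphereDoors (ℓ : (ι → SignType) → ℤ) : Finset (Finset (ι → SignType)) :=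
  {B | IsSignChain B ∧ #B + 1 = Fintype.card ι ∧ (∀ x ∈ B, x p ≠ -1) ∧
    IsAlternating true (B.val.map ℓ)}

variable {p}

theorem card_erase_mem_hemisphereDoors_mod_two (hℓ : NoComplementaryEdge ℓ)
    {C : Finset (ι → SignType)} (hC : C ∈ hemisphereRooms p) :
    #{x ∈ C | C.erase x ∈ hemisphereDoors p ℓ} % 2 =
      ((if IsAlternating true (C.val.map ℓ) then 1 else 0) +
        if IsAlternating false (C.val.map ℓ) then 1 else 0) % 2 := by
  obtain ⟨hchain, hcard, hhemi⟩ := (mem_filter.1 hC).2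
  rw [← hchain.card_alternating_erase_mod_two hℓ]
  congr 2
  refine filter_congr fun x hx => ?_
  simp only [hemisphereDoors, mem_filter, mem_univ, true_and, card_erase_of_mem hx]
  exact ⟨fun h => h.2.2.2, fun h => ⟨hchain.mono (erase_subset x C), by
    have := card_pos.2 ⟨x, hx⟩; omega, fun y hy => hhemi y (mem_of_mem_erase hy), h⟩⟩

theorem card_insert_mem_hemisphereRooms {B : Finset (ι → SignType)}
    (hB : B ∈ hemisphereDoors p ℓ) :
    #{y | y ∉ B ∧ insert y B ∈ hemisphereRooms p} = if ∀ x ∈ B, x p = 0 then 1 else 2 := by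
  obtain ⟨hchain, hcard, hhemi, -⟩ := (mem_filter.1 hB).2
  rw [← hchain.card_extensions hcard hhemi]
  congr 1
  refine filter_congr fun y _ => ⟨fun ⟨hyB, h⟩ => ?_, fun ⟨hyB, h, hyp⟩ => ?_⟩ <;>
    simp only [hemisphereRooms, mem_filter, mem_univ, true_and, card_insert_of_notMem hyB,
      forall_mem_insert] at h ⊢
  · exact ⟨hyB, h.1, h.2.2.1⟩
  · exact ⟨hyB, h, by omega, hyp, hhemi⟩

variable (p)

theorem card_alternating_hemisphereRooms_mod_two (hℓ : NoComplementaryEdge ℓ) :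
    (#{C ∈ hemisphereRooms p | IsAlternating true (C.val.map ℓ)} +
      #{C ∈ hemisphereRooms p | IsAlternating false (C.val.map ℓ)}) % 2 =
      #{B | IsSignChain B ∧ #B + 1 = Fintype.card ι ∧ (∀ x ∈ B, x p = 0) ∧
        IsAlternating true (B.val.map ℓ)} % 2 :=
  calc _ = (∑ C ∈ hemisphereRooms p, ((if IsAlternating true (C.val.map ℓ) then 1 else 0) +
        if IsAlternating false (C.val.map ℓ) then 1 else 0)) % 2 := by
        rw [sum_add_distrib, ← card_filter, ← card_filter]
    _ = (∑ C ∈ hemisphereRooms p, #{x ∈ C | C.erase x ∈ hemisphereDoors p ℓ}) % 2 := by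
        rw [sum_nat_mod, sum_congr rfl fun C hC =>
          (card_erase_mem_hemisphereDoors_mod_two hℓ hC).symm, ← sum_nat_mod]
    _ = (∑ B ∈ hemisphereDoors p ℓ, #{y | y ∉ B ∧ insert y B ∈ hemisphereRooms p}) % 2 := by
        rw [sum_card_erase_mem_eq_sum_card_insert_mem]
    _ = (∑ B ∈ hemisphereDoors p ℓ, if ∀ x ∈ B, x p = 0 then 1 else 0) % 2 := by
        rw [sum_nat_mod, sum_nat_mod (hemisphereDoors p ℓ)]
        refine congrArg (· % 2) (sum_congr rfl fun B hB => ?_)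
        rw [card_insert_mem_hemisphereRooms hB]
        split_ifs <;> rfl
    _ = _ := by
        rw [← card_filter, hemisphereDoors, filter_filter]
        congr 2
        ext B
        simp only [mem_filter, mem_univ, true_and]
        exact ⟨fun ⟨⟨h₁, h₂, _, h₃⟩, h₄⟩ => ⟨h₁, h₂, h₄, h₃⟩,
          fun ⟨h₁, h₂, h₄, h₃⟩ => ⟨⟨h₁, h₂, fun x hx => by simp [h₄ x hx], h₃⟩, h₄⟩⟩

open scoped Pointwise in
theorem card_alternating_eq_card_alternating_hemisphereRooms (hι : 0 < Fintype.card ι)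
    (hanti : IsAntipodal ℓ) (hℓ : NoComplementaryEdge ℓ) :
    #{C | IsSignChain C ∧ #C = Fintype.card ι ∧ IsAlternating true (C.val.map ℓ)} =
      #{C ∈ hemisphereRooms p | IsAlternating true (C.val.map ℓ)} +
      #{C ∈ hemisphereRooms p | IsAlternating false (C.val.map ℓ)} := by
  -- The nonzero values `x p` agree along a chain, so a full chain leaves the hemisphere iff
  -- its negative lies in it.
  rw [← card_filter_add_card_filter_not (p := fun C : Finset (ι → SignType) => ∀ x ∈ C, x p ≠ -1)]
  simp only [hemisphereRooms, filter_filter]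
  congr 1
  · congr 1
    ext C
    simp only [mem_filter, mem_univ, true_and]
    tauto
  refine card_nbij' (fun C => -C) (fun C => -C) (fun C hC => ?_) (fun C hC => ?_)
    (fun C _ => neg_neg C) (fun C _ => neg_neg C)
  · simp only [coe_filter, mem_univ, true_and, Set.mem_ofPred_eq] at hC ⊢
    obtain ⟨⟨hchain, hcard, halt⟩, hhemi⟩ := hC
    push Not at hhemi
    obtain ⟨x, hx, hxp⟩ := hhemi
    refine ⟨⟨hchain.neg, by rw [card_neg, hcard], fun y hy hyp => ?_⟩, ?_⟩
    · have := hchain.apply_eq_of_ne_zero (i := p) (mem_neg'.1 hy) hx (by simp [hyp]) (by simp [hxp])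
      simp [hyp, hxp] at this
    · rw [hchain.labels_neg hanti]
      exact halt.map_neg (hchain.zero_notMem_labels hℓ)
  · simp only [coe_filter, mem_univ, true_and, Set.mem_ofPred_eq] at hC ⊢
    obtain ⟨⟨hchain, hcard, hhemi⟩, halt⟩ := hC
    obtain ⟨x, hx, hxu⟩ := hchain.exists_supp_eq_univ hcard hι
    refine ⟨⟨hchain.neg, by rw [card_neg, hcard], ?_⟩, fun h => h (-x) (by simpa using hx) ?_⟩
    · rw [hchain.labels_neg hanti]
      exact halt.map_neg (hchain.zero_notMem_labels hℓ)
    · have hxp : x p = 1 := (by decide : ∀ σ : SignType, σ ≠ 0 → σ ≠ -1 → σ = 1) _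
        (mem_supp.1 (hxu ▸ mem_univ p)) (hhemi x hx)
      simp [hxp]

end Hemisphere

section Tucker

variable {n : ℕ} {x y : Fin n → SignType}

theorem snoc_zero_ne_zero (hx : x ≠ 0) : (Fin.snoc x 0 : Fin (n + 1) → SignType) ≠ 0 :=
  fun h => hx (funext fun i => by simpa using congrFun h i.castSucc)

theorem init_ne_zero {x : Fin (n + 1) → SignType} (hx : x ≠ 0) (hlast : x (Fin.last n) = 0) :
    Fin.init x ≠ 0 :=
  fun h => hx (funext fun i => Fin.lastCases hlast (fun j => congrFun h j) i)

theorem snoc_zero_neg (x : Fin n → SignType) :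
    (Fin.snoc (-x) 0 : Fin (n + 1) → SignType) = -Fin.snoc x 0 :=
  funext fun i => Fin.lastCases (by simp) (fun j => by simp) i

theorem Extends.snoc_zero (h : x ≼ y) :
    (Fin.snoc x 0 : Fin (n + 1) → SignType) ≼ Fin.snoc y 0 := fun i =>
  Fin.lastCases (by simp) (fun j hj => by simpa using h j (by simpa using hj)) i

theorem Extends.init {x y : Fin (n + 1) → SignType} (h : x ≼ y) : Fin.init x ≼ Fin.init y :=
  fun i => h i.castSucc

theorem snoc_init_of_last_eq_zero {x : Fin (n + 1) → SignType} (hx : x (Fin.last n) = 0) :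
    Fin.snoc (Fin.init x) 0 = x := by
  rw [← hx, Fin.snoc_init_self]

theorem IsAntipodal.comp_snoc {ℓ : (Fin (n + 1) → SignType) → ℤ} (hℓ : IsAntipodal ℓ) :
    IsAntipodal fun x : Fin n → SignType => ℓ (Fin.snoc x 0) := fun x hx => by
  show ℓ (Fin.snoc (-x) 0) = -ℓ (Fin.snoc x 0)
  rw [snoc_zero_neg, hℓ _ (snoc_zero_ne_zero hx)]

theorem NoComplementaryEdge.comp_snoc {ℓ : (Fin (n + 1) → SignType) → ℤ}
    (hℓ : NoComplementaryEdge ℓ) :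
    NoComplementaryEdge fun x : Fin n → SignType => ℓ (Fin.snoc x 0) := fun _ _ hx hxy =>
  hℓ _ _ (snoc_zero_ne_zero hx) hxy.snoc_zero

theorem IsSignChain.image_init {B : Finset (Fin (n + 1) → SignType)} (hB : IsSignChain B)
    (hlast : ∀ x ∈ B, x (Fin.last n) = 0) : IsSignChain (B.image Fin.init) := by
  refine ⟨fun h => ?_, ?_⟩
  · obtain ⟨x, hx, hx0⟩ := mem_image.1 h
    exact init_ne_zero (hB.ne_zero hx) (hlast x hx) hx0
  · rw [coe_image]
    exact hB.2.image_of_map_rel _ _ _ fun _ _ h => h.init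

theorem IsSignChain.image_snoc_zero {C : Finset (Fin n → SignType)} (hC : IsSignChain C) :
    IsSignChain (C.image fun x => (Fin.snoc x 0 : Fin (n + 1) → SignType)) := by
  refine ⟨fun h => ?_, ?_⟩
  · obtain ⟨x, hx, hx0⟩ := mem_image.1 h
    exact snoc_zero_ne_zero (hC.ne_zero hx) hx0
  · rw [coe_image]
    exact hC.2.image_of_map_rel _ _ _ fun _ _ h => h.snoc_zero

theorem card_boundary_alternating (ℓ : (Fin (n + 1) → SignType) → ℤ) :
    #{B | IsSignChain B ∧ #B + 1 = Fintype.card (Fin (n + 1)) ∧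
        (∀ x ∈ B, x (Fin.last n) = 0) ∧ IsAlternating true (B.val.map ℓ)} =
      #{C | IsSignChain C ∧ #C = Fintype.card (Fin n) ∧
        IsAlternating true (C.val.map fun x => ℓ (Fin.snoc x 0))} := by
  have hinj : Function.Injective
      fun x : Fin n → SignType => (Fin.snoc x 0 : Fin (n + 1) → SignType) :=
    fun _ _ h => by simpa using congrArg Fin.init h
  refine card_nbij' (fun B => B.image Fin.init) (fun C => C.image (Fin.snoc · 0)) (fun B hB => ?_)
    (fun C hC => ?_) (fun B hB => ?_) (fun C _ => ?_)
  · simp only [coe_filter, mem_univ, true_and, Set.mem_ofPred_eq, Fintype.card_fin] at hB ⊢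
    obtain ⟨hchain, hcard, hlast, halt⟩ := hB
    have hinv : ∀ x ∈ B, Fin.snoc (Fin.init x) 0 = x := fun x hx =>
      snoc_init_of_last_eq_zero (hlast x hx)
    have hinjOn : Set.InjOn Fin.init (B : Set (Fin (n + 1) → SignType)) := fun x hx y hy h => by
      rw [← hinv x hx, ← hinv y hy, h]
    refine ⟨hchain.image_init hlast, by rw [card_image_of_injOn hinjOn]; omega, ?_⟩
    rw [image_val_of_injOn hinjOn, Multiset.map_map]
    convert halt using 1
    exact Multiset.map_congr rfl fun x hx => by simp [hinv x hx]
  · simp only [coe_filter, mem_univ, true_and, Set.mem_ofPred_eq, Fintype.card_fin] at hC ⊢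
    obtain ⟨hchain, hcard, halt⟩ := hC
    refine ⟨hchain.image_snoc_zero, by rw [card_image_of_injective _ hinj]; omega,
      fun x hx => ?_, ?_⟩
    · obtain ⟨x, -, rfl⟩ := mem_image.1 hx
      simp
    · rw [image_val_of_injOn hinj.injOn, Multiset.map_map]
      exact halt
  · simp only [coe_filter, mem_univ, true_and, Set.mem_ofPred_eq] at hB
    dsimp only
    rw [image_image]
    exact (image_congr fun x hx => snoc_init_of_last_eq_zero (hB.2.2.1 x hx)).trans image_id
  · dsimp only
    rw [image_image]
    refine (image_congr fun x _ => ?_).trans image_id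
    simp

theorem odd_card_alternating_chains :
    ∀ {n : ℕ} (ℓ : (Fin n → SignType) → ℤ), IsAntipodal ℓ → NoComplementaryEdge ℓ →
      Odd #{C | IsSignChain C ∧ #C = n ∧ IsAlternating true (C.val.map ℓ)}
  | 0, ℓ, _, _ => by
    rw [card_eq_one.2 ⟨∅, ?_⟩]
    · exact odd_one
    ext C
    simp only [mem_filter, mem_univ, true_and, mem_singleton, card_eq_zero]
    refine ⟨fun h => h.2.1, ?_⟩
    rintro rfl
    exact ⟨⟨notMem_empty 0, by simp⟩, rfl, [], rfl, List.Pairwise.nil, trivial⟩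
  | n + 1, ℓ, hanti, hℓ => by
    have ih := odd_card_alternating_chains _ hanti.comp_snoc hℓ.comp_snoc
    rw [Nat.odd_iff] at ih ⊢
    have hsphere :=
      card_alternating_eq_card_alternating_hemisphereRooms (Fin.last n) (by simp) hanti hℓ
    have hhemi := card_alternating_hemisphereRooms_mod_two (Fin.last n) hℓ
    rw [card_boundary_alternating] at hhemi
    simp only [Fintype.card_fin] at hsphere hhemi
    rwa [hsphere, hhemi]

theorem octahedral_tucker {n m : ℕ} (ℓ : (Fin n → SignType) → ℤ) (hanti : IsAntipodal ℓ)
    (hℓ : NoComplementaryEdge ℓ) (hm : ∀ x, x ≠ 0 → |ℓ x| ≤ m) : n ≤ m := by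
  obtain ⟨C, hC⟩ := card_pos.1 (odd_card_alternating_chains ℓ hanti hℓ).pos
  obtain ⟨hchain, hcard, halt⟩ := (mem_filter.1 hC).2
  have hsub : ((C.val.map ℓ).map abs).toFinset ⊆ Icc 1 (m : ℤ) := fun a ha => by
    simp only [Multiset.mem_toFinset, Multiset.mem_map, mem_val] at ha
    obtain ⟨_, ⟨x, hx, rfl⟩, rfl⟩ := ha
    exact mem_Icc.2 ⟨abs_pos.2 (hℓ.ne_zero (hchain.ne_zero hx)), hm x (hchain.ne_zero hx)⟩
  have := card_le_card hsub
  rwa [Multiset.toFinset_card_of_nodup halt.nodup_map_abs, Multiset.card_map, Multiset.card_map,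
    card_val, hcard, Int.card_Icc, add_sub_cancel_right, Int.toNat_natCast] at this

end Tucker

section Coloring

variable {α : Type*} {k m : ℕ}

def IsKneserColoring (k : ℕ) (c : Finset α → Fin m) : Prop :=
  ∀ S T : Finset α, #S = k → #T = k → Disjoint S T → c S ≠ c T

/-- One more than the largest colour of a `k`-subset of `A`, and `0` if `A` has none. -/
def colorRank (c : Finset α → Fin m) (k : ℕ) (A : Finset α) : ℕ :=
  (A.powersetCard k).sup fun S => c S + 1

variable {c : Finset α → Fin m} {A B : Finset α}

theorem IsKneserColoring.pos (hc : IsKneserColoring k c) : 0 < k :=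
  Nat.pos_of_ne_zero fun hk => hc ∅ ∅ (by simp [hk]) (by simp [hk]) (disjoint_empty_left _) rfl

theorem colorRank_le : colorRank c k A ≤ m :=
  Finset.sup_le fun S _ => (c S).isLt

theorem one_le_colorRank (h : k ≤ #A) : 1 ≤ colorRank c k A := by
  obtain ⟨S, hSA, hS⟩ := exists_subset_card_eq h
  exact (le_sup (f := fun S => (c S : ℕ) + 1) (mem_powersetCard.2 ⟨hSA, hS⟩)).trans' (by omega)

theorem exists_color_eq_colorRank (h : 1 ≤ colorRank c k A) :
    ∃ S ⊆ A, #S = k ∧ (c S : ℕ) + 1 = colorRank c k A := by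
  have hne : (A.powersetCard k).Nonempty := by
    by_contra hne
    simp [colorRank, not_nonempty_iff_eq_empty.1 hne] at h
  obtain ⟨S, hS, heq⟩ := exists_mem_eq_sup _ hne fun S => (c S : ℕ) + 1
  exact ⟨S, (mem_powersetCard.1 hS).1, (mem_powersetCard.1 hS).2, heq.symm⟩

theorem IsKneserColoring.colorRank_ne (hc : IsKneserColoring k c) (hAB : Disjoint A B)
    (hA : 1 ≤ colorRank c k A) : colorRank c k A ≠ colorRank c k B := fun h => by
  obtain ⟨S, hSA, hS, hcS⟩ := exists_color_eq_colorRank hA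
  obtain ⟨T, hTB, hT, hcT⟩ := exists_color_eq_colorRank (h ▸ hA)
  exact hc S T hS hT (hAB.mono hSA hTB) (Fin.ext (by omega))

end Coloring

section SignParts

variable {ι : Type*} [Fintype ι] {x y : ι → SignType}

def posSupp (x : ι → SignType) : Finset ι := {i | x i = 1}

def negSupp (x : ι → SignType) : Finset ι := posSupp (-x)

theorem negSupp_neg (x : ι → SignType) : negSupp (-x) = posSupp x := by
  rw [negSupp, neg_neg]

theorem Extends.disjoint_posSupp_negSupp (h : x ≼ y) : Disjoint (posSupp x) (negSupp y) :=
  disjoint_left.2 fun i hx hy => by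
    simp only [negSupp, posSupp, mem_filter, mem_univ, true_and, Pi.neg_apply] at hx hy
    rw [h i (by rw [hx]; decide), hx] at hy
    exact absurd hy (by decide)

theorem card_supp_eq_add (x : ι → SignType) : #(supp x) = #(posSupp x) + #(negSupp x) := by
  rw [← card_union_of_disjoint (Extends.refl x).disjoint_posSupp_negSupp]
  congr 1
  ext i
  simp only [supp, negSupp, posSupp, mem_filter, mem_univ, true_and, mem_union, Pi.neg_apply]
  rcases x i with _ | _ | _ <;> decide

end SignParts

section KneserLabel

variable {n k m : ℕ} {c : Finset (Fin n) → Fin m} {x : Fin n → SignType}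

noncomputable def kneserLabel (c : Finset (Fin n) → Fin m) (k : ℕ) (x : Fin n → SignType) : ℤ :=
  if #(supp x) + 2 ≤ 2 * k then
    -- `toLex (-x) < toLex x` says that the first nonzero coordinate of `x` is positive
    if toLex (-x) < toLex x then #(supp x) else -#(supp x)
  else if colorRank c k (negSupp x) < colorRank c k (posSupp x) then
    2 * k - 2 + colorRank c k (posSupp x)
  else -(2 * k - 2 + colorRank c k (negSupp x))

theorem abs_kneserLabel_of_small (hx : #(supp x) + 2 ≤ 2 * k) :
    |kneserLabel c k x| = #(supp x) := by
  rw [kneserLabel, if_pos hx]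
  split_ifs <;> simp

theorem IsKneserColoring.colorRank_posSupp_ne_negSupp (hc : IsKneserColoring k c)
    (hx : ¬ #(supp x) + 2 ≤ 2 * k) :
    colorRank c k (posSupp x) ≠ colorRank c k (negSupp x) := by
  have hdisj := (Extends.refl x).disjoint_posSupp_negSupp
  rw [card_supp_eq_add] at hx
  rcases le_or_gt k #(posSupp x) with h | h
  · exact hc.colorRank_ne hdisj (one_le_colorRank h)
  · exact (hc.colorRank_ne hdisj.symm (one_le_colorRank (by omega))).symm

theorem IsKneserColoring.abs_kneserLabel_mem_Ioc_of_large (hc : IsKneserColoring k c)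
    (hx : ¬ #(supp x) + 2 ≤ 2 * k) :
    |kneserLabel c k x| ∈ Set.Ioc (2 * k - 2 : ℤ) (2 * k - 2 + m) := by
  have hne := hc.colorRank_posSupp_ne_negSupp hx
  have hk := hc.pos
  have hpos : colorRank c k (posSupp x) ≤ m := colorRank_le
  have hneg : colorRank c k (negSupp x) ≤ m := colorRank_le
  rw [kneserLabel, if_neg hx, Set.mem_Ioc]
  split_ifs <;> (try rw [abs_neg]) <;> rw [abs_of_nonneg (by omega)] <;> omega

theorem IsKneserColoring.isAntipodal_kneserLabel (hc : IsKneserColoring k c) :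
    IsAntipodal (kneserLabel c k) := by
  intro x hx
  have hlex : toLex (-x) ≠ toLex x := fun h => hx (funext fun i =>
    (by decide : ∀ σ : SignType, -σ = σ → σ = 0) _ (congrFun (toLex.injective h) i))
  rw [kneserLabel, kneserLabel, supp_neg, negSupp_neg, neg_neg,
    show posSupp (-x) = negSupp x from rfl]
  split_ifs with hsmall h₁ h₂ h₂ h₁ h₂ h₂
  · exact absurd (h₁.trans h₂) (lt_irrefl _)
  · rw [neg_neg]
  · rfl
  · exact absurd (lt_or_gt_of_ne hlex) (by tauto)
  all_goals have := hc.colorRank_posSupp_ne_negSupp hsmall; omega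

theorem IsKneserColoring.noComplementaryEdge_kneserLabel (hc : IsKneserColoring k c) :
    NoComplementaryEdge (kneserLabel c k) := by
  intro x y hx hxy h
  have hcard := card_le_card hxy.supp_subset
  have habs : |kneserLabel c k x| = |kneserLabel c k y| := by rw [h, abs_neg]
  by_cases hy : #(supp y) + 2 ≤ 2 * k
  · rw [abs_kneserLabel_of_small (by omega), abs_kneserLabel_of_small hy] at habs
    obtain rfl := hxy.eq_of_card_supp_le (by omega)
    have hlabel := abs_kneserLabel_of_small (c := c) hy
    rw [show kneserLabel c k x = 0 by omega, abs_zero] at hlabel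
    have := card_pos.2 (supp_nonempty_iff.2 hx)
    omega
  by_cases hx' : #(supp x) + 2 ≤ 2 * k
  · have := (hc.abs_kneserLabel_mem_Ioc_of_large (m := m) hy).1
    rw [habs.symm, abs_kneserLabel_of_small hx'] at this
    omega
  have hxne := hc.colorRank_posSupp_ne_negSupp hx'
  have hk := hc.pos
  have hdisj : Disjoint (negSupp x) (posSupp y) := by
    have := hxy.neg.disjoint_posSupp_negSupp
    rwa [negSupp_neg] at this
  rw [kneserLabel, kneserLabel, if_neg hx', if_neg hy] at h
  by_cases hxs : colorRank c k (negSupp x) < colorRank c k (posSupp x) <;>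
    by_cases hys : colorRank c k (negSupp y) < colorRank c k (posSupp y) <;>
    simp only [hxs, hys, ↓reduceIte] at h
  · omega
  · exact hc.colorRank_ne hxy.disjoint_posSupp_negSupp (by omega) (by omega)
  · exact hc.colorRank_ne hdisj (by omega) (by omega)
  · omega

theorem IsKneserColoring.abs_kneserLabel_le (hc : IsKneserColoring k c) (x : Fin n → SignType) :
    |kneserLabel c k x| ≤ ((2 * k - 2 + m : ℕ) : ℤ) := by
  have := hc.pos
  by_cases hx : #(supp x) + 2 ≤ 2 * k
  · rw [abs_kneserLabel_of_small hx]
    omega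
  · have := (hc.abs_kneserLabel_mem_Ioc_of_large hx).2
    omega

theorem IsKneserColoring.le_two_mul_sub_two_add (hc : IsKneserColoring k c) :
    n ≤ 2 * k - 2 + m :=
  octahedral_tucker _ hc.isAntipodal_kneserLabel hc.noComplementaryEdge_kneserLabel
    fun x _ => hc.abs_kneserLabel_le x

end KneserLabel

theorem exists_isKneserColoring {n k : ℕ} (hk : 0 < k) :
    ∃ c : Finset (Fin n) → Fin (n - 2 * k + 2), IsKneserColoring k c := by
  refine ⟨fun S => if h : S.Nonempty then ⟨min (S.min' h) (n - 2 * k + 1), by omega⟩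
    else ⟨0, by omega⟩, fun S T hS hT hST hcol => ?_⟩
  have hSne : S.Nonempty := card_pos.1 (by omega)
  have hTne : T.Nonempty := card_pos.1 (by omega)
  simp only [dif_pos hSne, dif_pos hTne, Fin.mk.injEq] at hcol
  by_cases hsmall : (S.min' hSne : ℕ) < n - 2 * k + 1 ∨ (T.min' hTne : ℕ) < n - 2 * k + 1
  · have : S.min' hSne = T.min' hTne := Fin.ext (by omega)
    exact disjoint_left.1 hST (S.min'_mem hSne) (this ▸ T.min'_mem hTne)
  push Not at hsmall
  have hsub : (S ∪ T).map Fin.valEmbedding ⊆ Ico (n - 2 * k + 1) n := fun i hi => by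
    obtain ⟨j, hj, rfl⟩ := mem_map.1 hi
    refine mem_Ico.2 ⟨?_, j.isLt⟩
    rcases mem_union.1 hj with hj | hj
    · exact hsmall.1.trans (Fin.le_iff_val_le_val.1 (S.min'_le j hj))
    · exact hsmall.2.trans (Fin.le_iff_val_le_val.1 (T.min'_le j hj))
  have := card_le_card hsub
  rw [card_map, card_union_of_disjoint hST, Nat.card_Ico] at this
  omega

end Kneser

/-- **Kneser's conjecture (Lovász's theorem).** For `n ≥ 2k ≥ 4`, the chromatic
number of the Kneser graph on the `k`-subsets of `[n]` (adjacency = disjointness)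
equals `n - 2k + 2`. The chromatic number is encoded as the least `m` for which a
coloring `c` of the `k`-subsets with `m` colors gives distinct colors to disjoint
`k`-subsets. -/
theorem kneser_conjecture (n k : ℕ) (hk : 2 ≤ k) (hn : 2 * k ≤ n) :
    sInf {m : ℕ | ∃ c : Finset (Fin n) → Fin m,
        ∀ S T : Finset (Fin n), S.card = k → T.card = k → Disjoint S T →
          c S ≠ c T} = n - 2 * k + 2 := by
  obtain ⟨c, hc⟩ := Kneser.exists_isKneserColoring (n := n) (k := k) (by omega)
  refine le_antisymm (Nat.sInf_le ⟨c, hc⟩) (le_csInf ⟨_, c, hc⟩ ?_)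
  rintro m ⟨c', hc'⟩
  have := Kneser.IsKneserColoring.le_two_mul_sub_two_add (c := c') hc'
  omega
end

section
/- For n ≥ 4, the chromatic number of the hypergraph whose vertices are the edges of the complete graph K_n and whose hyperedges are the 4-element sets of edges forming a subgraph of maximum degree at most 2 equals n - ⌊√(2n + 1/4) - 1/2⌋. -/
/-!
Let `t` be the largest integer with `t (t + 1) ≤ 2n`; it equals `⌊√(2n + 1/4) - 1/2⌋`.

Upper bound: fix a set `T` of `t` vertices. A pair meeting the complement of `T` is coloured by
one of its vertices outside `T`, and the `C(t, 2) ≤ n - t` pairs inside `T` get pairwise distinct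
colours. A monochromatic hyperedge has at most one member inside `T`, so its other three members
share a vertex, which is impossible.

Lower bound: a colour class containing no hyperedge has at most three members or is a near star
(all of its members but at most one pass through a common vertex); this follows by looking at
whether the class contains two disjoint pairs and using that an intersecting family of pairs is a
star or a triangle. Deleting the centres of the `a` near-star classes leaves at least `n - a`
vertices, whose pairs meet every near-star class at most once and every other class at most three
times. Hence `C(n - a, 2) ≤ a + 3 (m - a)` for an `m`-colouring, which forces `m ≥ n - t`.
-/

open Finset

namespace KneserKG4

variable {α β : Type*} [DecidableEq α]

def IsHyperedge (A : Fin 4 → Finset α) : Prop :=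
  (∀ j, #(A j) = 2) ∧ Function.Injective A ∧ ∀ v, #{j | v ∈ A j} ≤ 2

def IsIndependent (C : Set (Finset α)) : Prop :=
  ∀ A : Fin 4 → Finset α, (∀ j, A j ∈ C) → ¬ IsHyperedge A

def IsProperColoring (c : Finset α → β) : Prop :=
  ∀ b, IsIndependent {g | c g = b}

theorem isProperColoring_iff {c : Finset α → β} :
    IsProperColoring c ↔ ∀ A : Fin 4 → Finset α, (∀ j, #(A j) = 2) → Function.Injective A →
      (∀ v, #{j | v ∈ A j} ≤ 2) → ∃ j j', c (A j) ≠ c (A j') := by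
  constructor
  · intro hc A h2 hinj hdeg
    by_contra! hmono
    exact hc (c (A 0)) A (fun j => hmono j 0) ⟨h2, hinj, hdeg⟩
  · rintro hc _ A hA ⟨h2, hinj, hdeg⟩
    obtain ⟨j, j', hne⟩ := hc A h2 hinj hdeg
    exact hne ((hA j).trans (hA j').symm)

theorem eq_pair_of_card_eq_two {s : Finset α} {x y : α} (hs : #s = 2) (hx : x ∈ s)
    (hy : y ∈ s) (hxy : x ≠ y) : s = {x, y} :=
  (eq_of_subset_of_card_le (insert_subset hx (singleton_subset_iff.2 hy))
    (by rw [hs, card_pair hxy])).symm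

theorem isHyperedge_of_disjoint {e f g h : Finset α} (he : #e = 2) (hf : #f = 2) (hg : #g = 2)
    (hh : #h = 2) (hinj : Function.Injective ![e, f, g, h]) (hef : Disjoint e f)
    (hgh : ∀ x ∈ g, x ∈ h → x ∉ e ∪ f) : IsHyperedge ![e, f, g, h] := by
  refine ⟨fun j => by fin_cases j <;> assumption, hinj, fun v => ?_⟩
  have hv : ¬ (v ∈ e ∧ v ∈ f) := fun hv => disjoint_left.1 hef hv.1 hv.2
  have hv' : ¬ (v ∈ g ∧ v ∈ h ∧ (v ∈ e ∨ v ∈ f)) := fun hv => hgh v hv.1 hv.2.1 (mem_union.2 hv.2.2)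
  rw [card_filter, Fin.sum_univ_four]
  simp only [Matrix.cons_val_zero, Matrix.cons_val_one, Matrix.cons_val_two,
    Matrix.cons_val_three, Matrix.head_cons, Matrix.tail_cons]
  by_cases h1 : v ∈ e <;> by_cases h2 : v ∈ f <;> by_cases h3 : v ∈ g <;> by_cases h4 : v ∈ h <;>
    simp_all

variable {C : Finset (Finset α)}

theorem exists_triangle (hC : ∀ g ∈ C, #g = 2) {U : Set α}
    (hmeet : ∀ g ∈ C, ∀ h ∈ C, g ≠ h → ∃ x ∈ U, x ∈ g ∧ x ∈ h) (hcard : 1 < #C)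
    (hstar : ∀ x ∈ U, ∃ g ∈ C, x ∉ g) :
    ∃ x ∈ U, ∃ y ∈ U, ∃ z ∈ U, x ≠ y ∧ x ≠ z ∧ y ≠ z ∧
      {x, y} ∈ C ∧ {x, z} ∈ C ∧ {y, z} ∈ C := by
  obtain ⟨g, hg, h, hh, hgh⟩ := one_lt_card.1 hcard
  obtain ⟨x, hxU, hxg, hxh⟩ := hmeet g hg h hh hgh
  obtain ⟨i, hi, hxi⟩ := hstar x hxU
  obtain ⟨y, hyU, hyg, hyi⟩ := hmeet g hg i hi (by rintro rfl; exact hxi hxg)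
  obtain ⟨z, hzU, hzh, hzi⟩ := hmeet h hh i hi (by rintro rfl; exact hxi hxh)
  have hxy : x ≠ y := by rintro rfl; exact hxi hyi
  have hxz : x ≠ z := by rintro rfl; exact hxi hzi
  have hg' := eq_pair_of_card_eq_two (hC g hg) hxg hyg hxy
  have hh' := eq_pair_of_card_eq_two (hC h hh) hxh hzh hxz
  have hyz : y ≠ z := by rintro rfl; exact hgh (hg'.trans hh'.symm)
  refine ⟨x, hxU, y, hyU, z, hzU, hxy, hxz, hyz, hg' ▸ hg, hh' ▸ hh, ?_⟩
  rwa [← eq_pair_of_card_eq_two (hC i hi) hyi hzi hyz]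

theorem mem_triangle_of_not_disjoint {g : Finset α} {x y z : α} (hg : #g = 2) (hxy : x ≠ y)
    (hxz : x ≠ z) (hyz : y ≠ z) (gxy : ¬ Disjoint g {x, y}) (gxz : ¬ Disjoint g {x, z})
    (gyz : ¬ Disjoint g {y, z}) : g ∈ ({{x, y}, {x, z}, {y, z}} : Finset (Finset α)) := by
  obtain ⟨u, hu, hu'⟩ := not_disjoint_iff.1 gxy
  rw [mem_insert, mem_singleton] at hu'
  rcases hu' with rfl | rfl
  · obtain ⟨w, hw, hw'⟩ := not_disjoint_iff.1 gyz
    rw [mem_insert, mem_singleton] at hw'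
    rcases hw' with rfl | rfl
    · simp [eq_pair_of_card_eq_two hg hu hw hxy]
    · simp [eq_pair_of_card_eq_two hg hu hw hxz]
  · obtain ⟨w, hw, hw'⟩ := not_disjoint_iff.1 gxz
    rw [mem_insert, mem_singleton] at hw'
    rcases hw' with rfl | rfl
    · simp [eq_pair_of_card_eq_two hg hw hu hxy]
    · simp [eq_pair_of_card_eq_two hg hu hw hyz]

theorem pair_mem_of_three_mem_union {e f : Finset α} (he : #e = 2) (hf : #f = 2) {x y z : α}
    (hxy : x ≠ y) (hxz : x ≠ z) (hyz : y ≠ z) (hx : x ∈ e ∪ f) (hy : y ∈ e ∪ f)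
    (hz : z ∈ e ∪ f) : ({x, y} : Finset α) ∈ ({e, f} : Finset (Finset α)) ∨
      ({x, z} : Finset α) ∈ ({e, f} : Finset (Finset α)) ∨
      ({y, z} : Finset α) ∈ ({e, f} : Finset (Finset α)) := by
  have he' {a b : α} (ha : a ∈ e) (hb : b ∈ e) (hab : a ≠ b) :
      ({a, b} : Finset α) ∈ ({e, f} : Finset (Finset α)) := by
    simp [← eq_pair_of_card_eq_two he ha hb hab]
  have hf' {a b : α} (ha : a ∈ f) (hb : b ∈ f) (hab : a ≠ b) :
      ({a, b} : Finset α) ∈ ({e, f} : Finset (Finset α)) := by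
    simp [← eq_pair_of_card_eq_two hf ha hb hab]
  rw [mem_union] at hx hy hz
  rcases hx with hx | hx <;> rcases hy with hy | hy <;> rcases hz with hz | hz <;>
    first
      | exact .inl (he' hx hy hxy) | exact .inl (hf' hx hy hxy)
      | exact .inr (.inl (he' hx hz hxz)) | exact .inr (.inl (hf' hx hz hxz))
      | exact .inr (.inr (he' hy hz hyz)) | exact .inr (.inr (hf' hy hz hyz))

theorem exists_forall_mem_or_card_le_three (hC : ∀ g ∈ C, #g = 2)
    (hint : ∀ g ∈ C, ∀ h ∈ C, ¬ Disjoint g h) : (∃ v, ∀ g ∈ C, v ∈ g) ∨ #C ≤ 3 := by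
  by_cases hstar : ∃ v, ∀ g ∈ C, v ∈ g
  · exact .inl hstar
  push Not at hstar
  rcases le_or_gt #C 1 with hC1 | hC1
  · exact .inr (by omega)
  have hmeet : ∀ g ∈ C, ∀ h ∈ C, g ≠ h → ∃ x ∈ (Set.univ : Set α), x ∈ g ∧ x ∈ h :=
    fun g hg h hh _ => by simpa using not_disjoint_iff.1 (hint g hg h hh)
  obtain ⟨x, -, y, -, z, -, hxy, hxz, hyz, hxyC, hxzC, hyzC⟩ :=
    exists_triangle hC hmeet hC1 fun x _ => hstar x
  refine .inr ((card_le_card (t := {{x, y}, {x, z}, {y, z}}) fun g hg => ?_).trans card_le_three)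
  exact mem_triangle_of_not_disjoint (hC g hg) hxy hxz hyz (hint g hg _ hxyC) (hint g hg _ hxzC)
    (hint g hg _ hyzC)

def IsNearStar (C : Finset (Finset α)) : Prop :=
  ∃ v, #{g ∈ C | v ∉ g} ≤ 1

theorem card_le_three_or_isNearStar_of_disjoint (hC : ∀ g ∈ C, #g = 2)
    (hind : IsIndependent (C : Set (Finset α))) {e f : Finset α} (he : e ∈ C) (hf : f ∈ C)
    (hef : Disjoint e f) : #C ≤ 3 ∨ IsNearStar C := by
  set C' := C \ {e, f}
  have hmeet : ∀ g ∈ C', ∀ h ∈ C', g ≠ h → ∃ x ∈ (↑(e ∪ f) : Set α), x ∈ g ∧ x ∈ h := by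
    intro g hg h hh hgh
    by_contra! hno
    simp only [C', mem_sdiff, mem_insert, mem_singleton, not_or] at hg hh
    have hne : e ≠ f := by
      rintro rfl
      simpa [disjoint_self.1 hef] using hC e he
    refine hind ![e, f, g, h] (fun j => by fin_cases j <;> simp [*]) (isHyperedge_of_disjoint
      (hC e he) (hC f hf) (hC g hg.1) (hC h hh.1) ?_ hef fun x hxg hxh hx => hno x hx hxg hxh)
    intro a b hab
    fin_cases a <;> fin_cases b <;> simp_all
  rcases le_or_gt #C' 1 with hC' | hC'
  · left
    have : #C ≤ #C' + #{e, f} := card_le_card_sdiff_add_card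
    have : #{e, f} ≤ 2 := card_le_two
    omega
  by_cases hstar : ∃ x ∈ e ∪ f, ∀ g ∈ C', x ∈ g
  · obtain ⟨x, hx, hxC'⟩ := hstar
    have hef' : ∀ g ∈ C, x ∉ g → g = e ∨ g = f := fun g hg hxg => by
      by_contra! hg'
      exact hxg (hxC' g (by simp [C', hg, hg']))
    refine .inr ⟨x, card_le_one.2 fun g hg h hh => ?_⟩
    rw [mem_filter] at hg hh
    rw [mem_union] at hx
    rcases hef' g hg.1 hg.2 with rfl | rfl <;> rcases hef' h hh.1 hh.2 with rfl | rfl <;> tauto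
  push Not at hstar
  obtain ⟨x, hx, y, hy, z, hz, hxy, hxz, hyz, hxyC, hxzC, hyzC⟩ :=
    exists_triangle (fun g hg => hC g (mem_sdiff.1 hg).1) hmeet hC' fun x hx => hstar x hx
  rcases pair_mem_of_three_mem_union (hC e he) (hC f hf) hxy hxz hyz hx hy hz with h | h | h <;>
    simp [mem_sdiff] at hxyC hxzC hyzC h <;> tauto

theorem IsIndependent.card_le_three_or_isNearStar (hC : ∀ g ∈ C, #g = 2)
    (hind : IsIndependent (C : Set (Finset α))) : #C ≤ 3 ∨ IsNearStar C := by
  by_cases hdisj : ∃ e ∈ C, ∃ f ∈ C, Disjoint e f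
  · obtain ⟨e, he, f, hf, hef⟩ := hdisj
    exact card_le_three_or_isNearStar_of_disjoint hC hind he hf hef
  push Not at hdisj
  rcases exists_forall_mem_or_card_le_three hC hdisj with ⟨v, hv⟩ | h3
  · exact .inr ⟨v, by simp [filter_false_of_mem fun g hg => not_not.2 (hv g hg)]⟩
  · exact .inl h3

theorem exists_le_card_choose_two_le [Fintype α] [Fintype β]
    {c : Finset α → β} (hc : IsProperColoring c) :
    ∃ a ≤ Fintype.card β, (Fintype.card α - a).choose 2 ≤ a + 3 * (Fintype.card β - a) := by
  classical
  let colorClass (b : β) : Finset (Finset α) := {g ∈ univ.powersetCard 2 | c g = b}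
  have hclass (b : β) : #(colorClass b) ≤ 3 ∨ IsNearStar (colorClass b) :=
    IsIndependent.card_le_three_or_isNearStar
      (fun g hg => (mem_powersetCard.1 (mem_filter.1 hg).1).2) fun A hA => hc b A fun j => (mem_filter.1 (hA j)).2
  let stars : Finset β := {b | IsNearStar (colorClass b)}
  choose v hv using fun b (hb : b ∈ stars) => (mem_filter.1 hb).2
  let S : Finset α := stars.attach.image fun b => v b.1 b.2
  let D : Finset (Finset α) := Sᶜ.powersetCard 2
  have hfiber (b : β) : #{g ∈ D | c g = b} ≤ if b ∈ stars then 1 else 3 := by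
    have hsub : {g ∈ D | c g = b} ⊆ colorClass b := fun g hg => by
      simp only [D, colorClass, mem_filter, mem_powersetCard] at hg ⊢
      exact ⟨⟨subset_univ g, hg.1.2⟩, hg.2⟩
    split_ifs with hb
    · refine le_trans (card_le_card fun g hg => mem_filter.2 ⟨hsub hg, ?_⟩) (hv b hb)
      intro hvg
      have hvS : v b hb ∈ S := mem_image.2 ⟨⟨b, hb⟩, mem_attach _ _, rfl⟩
      exact mem_compl.1 ((mem_powersetCard.1 (mem_filter.1 hg).1).1 hvg) hvS
    · exact (card_le_card hsub).trans ((hclass b).resolve_right fun h => hb (by simpa [stars]))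
  refine ⟨#stars, card_le_univ _, ?_⟩
  calc (Fintype.card α - #stars).choose 2 ≤ (Fintype.card α - #S).choose 2 :=
        Nat.choose_le_choose _ (Nat.sub_le_sub_left (card_image_le.trans (card_attach).le) _)
    _ = #D := by simp [D, card_compl]
    _ = ∑ b, #{g ∈ D | c g = b} := card_eq_sum_card_fiberwise fun _ _ => mem_univ _
    _ ≤ ∑ b, if b ∈ stars then 1 else 3 := sum_le_sum fun b _ => hfiber b
    _ = #stars + 3 * (Fintype.card β - #stars) := by
      rw [sum_ite]
      simp [filter_not, card_univ_sdiff, mul_comm]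

theorem choose_two_mul_two (n : ℕ) : n.choose 2 * 2 = n * (n - 1) := by
  cases n with
  | zero => rfl
  | succ k => simpa [mul_comm] using (Nat.add_one_mul_choose_eq k 1).symm

theorem le_add_of_choose_two_le {N m a t : ℕ} (ht : 1 ≤ t) (hN : 2 * N < (t + 1) * (t + 2))
    (ha : a ≤ m) (h : (N - a).choose 2 ≤ a + 3 * (m - a)) : N ≤ m + t := by
  by_contra! hlt
  have hchoose := choose_two_mul_two (N - a)
  have hNa : t + 1 ≤ N - a := by omega
  zify [ha, show a ≤ N by omega, show 1 ≤ N - a by omega] at *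
  nlinarith [mul_nonneg (sub_nonneg.2 hNa) (sub_nonneg.2 hNa)]

theorem isProperColoring_of_injOn [Fintype α] {T : Finset α} (e : ↥Tᶜ ≃ β)
    {ψ : Finset α → β} (hψ : Set.InjOn ψ (T.powersetCard 2)) :
    IsProperColoring fun g => if h : (g \ T).Nonempty
      then e ⟨h.choose, mem_compl.2 (mem_sdiff.1 h.choose_spec).2⟩ else ψ g := by
  rintro b A hA ⟨h2, hinj, hdeg⟩
  simp only [Set.mem_ofPred_eq] at hA
  have hinside : #{j | A j ⊆ T} ≤ 1 := by
    refine card_le_one.2 fun j hj j' hj' => hinj (hψ ?_ ?_ ?_)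
    · exact mem_powersetCard.2 ⟨(mem_filter.1 hj).2, h2 j⟩
    · exact mem_powersetCard.2 ⟨(mem_filter.1 hj').2, h2 j'⟩
    have hAj := hA j
    have hAj' := hA j'
    rw [dif_neg (sdiff_nonempty.not.2 (not_not.2 (mem_filter.1 hj).2))] at hAj
    rw [dif_neg (sdiff_nonempty.not.2 (not_not.2 (mem_filter.1 hj').2))] at hAj'
    exact hAj.trans hAj'.symm
  have houtside :
      ({j | ¬ A j ⊆ T} : Finset (Fin 4)) ⊆ ({j | (e.symm b : α) ∈ A j} : Finset _) := by
    intro j hj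
    have hne := sdiff_nonempty.2 (mem_filter.1 hj).2
    have hAj := hA j
    rw [dif_pos hne, ← Equiv.eq_symm_apply] at hAj
    simpa [← hAj] using (mem_sdiff.1 hne.choose_spec).1
  have := card_filter_add_card_filter_not (s := univ) (p := fun j => A j ⊆ T)
  have := card_le_card houtside
  have := hdeg (e.symm b)
  simp only [card_univ, Fintype.card_fin] at *
  omega

theorem exists_isProperColoring [Fintype α] [Fintype β] {t : ℕ}
    (ht : t * (t + 1) ≤ 2 * Fintype.card α) (hβ : Fintype.card β = Fintype.card α - t)
    (hβ0 : 0 < Fintype.card β) : ∃ c : Finset α → β, IsProperColoring c := by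
  classical
  obtain ⟨T, -, hT⟩ := exists_subset_card_eq (s := (univ : Finset α)) (n := t)
    (by rw [card_univ]; omega)
  have : Nonempty β := Fintype.card_pos_iff.1 hβ0
  obtain ⟨ψ, -, hψ⟩ := (T.powersetCard 2).finite_toSet.exists_injOn_of_encard_le
    (t := (Set.univ : Set β)) (by
      have hchoose := choose_two_mul_two t
      have : t * (t + 1) = t * (t - 1) + 2 * t := by cases t <;> simp; ring
      simp only [Set.encard_coe_eq_coe_finsetCard, card_powersetCard, hT, Set.encard_univ,
        ENat.card_eq_coe_fintype_card, hβ]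
      exact_mod_cast (show t.choose 2 ≤ Fintype.card α - t by omega))
  exact ⟨_, isProperColoring_of_injOn (Fintype.equivOfCardEq (by simp [hβ, hT])) hψ⟩

theorem exists_mul_succ_le_lt_mul_succ (N : ℕ) : ∃ t, t * (t + 1) ≤ N ∧ N < (t + 1) * (t + 2) := by
  classical
  have hex : ∃ t, N < (t + 1) * (t + 2) := ⟨N, by nlinarith⟩
  refine ⟨Nat.find hex, ?_, Nat.find_spec hex⟩
  cases h : Nat.find hex with
  | zero => simp
  | succ k => simpa using Nat.find_min hex (h ▸ k.lt_succ_self)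

theorem floor_sqrt_two_mul_add_quarter_sub_half {n t : ℕ} (h1 : t * (t + 1) ≤ 2 * n) (h2 : 2 * n < (t + 1) * (t + 2)) :
    ⌊Real.sqrt (2 * (n : ℝ) + 1 / 4) - 1 / 2⌋ = t := by
  have h1' : ((t * (t + 1) : ℕ) : ℝ) ≤ ((2 * n : ℕ) : ℝ) := by exact_mod_cast h1
  have h2' : ((2 * n : ℕ) : ℝ) < (((t + 1) * (t + 2) : ℕ) : ℝ) := by exact_mod_cast h2
  push_cast at h1' h2'
  have hlow : (t : ℝ) + 1 / 2 ≤ Real.sqrt (2 * n + 1 / 4) :=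
    Real.le_sqrt_of_sq_le (by nlinarith)
  have hup : Real.sqrt (2 * n + 1 / 4) < t + 3 / 2 :=
    (Real.sqrt_lt' (by positivity)).2 (by nlinarith)
  rw [Int.floor_eq_iff]
  push_cast
  constructor <;> linarith

end KneserKG4

open KneserKG4 in
/-- For `n ≥ 4`, the chromatic number of the hypergraph `KG⁴_{(2,…,2)}([n] choose 2)`
— vertices are the `2`-subsets of `[n]` (edges of `K_n`), and four distinct
`2`-subsets form a hyperedge iff every vertex of `[n]` lies in at most `2` of them
(a subgraph of maximum degree `≤ 2`) — equals `n - ⌊√(2n + 1/4) - 1/2⌋`. -/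
theorem chromatic_KG4 (n : ℕ) (hn : 4 ≤ n) :
    ((sInf {m : ℕ | ∃ c : Finset (Fin n) → Fin m,
        ∀ A : Fin 4 → Finset (Fin n), (∀ j, (A j).card = 2) →
          Function.Injective A →
          (∀ v : Fin n, (Finset.univ.filter fun j => v ∈ A j).card ≤ 2) →
          ∃ j j', c (A j) ≠ c (A j')} : ℕ) : ℤ)
      = (n : ℤ) - ⌊Real.sqrt (2 * (n : ℝ) + 1 / 4) - 1 / 2⌋ := by
  obtain ⟨t, ht, ht'⟩ := exists_mul_succ_le_lt_mul_succ (2 * n)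
  have ht1 : 1 ≤ t := Nat.pos_of_ne_zero (by rintro rfl; omega)
  have htn : t < n := by nlinarith
  rw [IsLeast.csInf_eq (a := n - t), Nat.cast_sub htn.le, floor_sqrt_two_mul_add_quarter_sub_half ht ht']
  constructor
  · obtain ⟨c, hc⟩ := exists_isProperColoring (α := Fin n) (β := Fin (n - t))
      (by simpa using ht) (by simp) (by simp; omega)
    exact ⟨c, isProperColoring_iff.1 hc⟩
  · rintro m ⟨c, hc⟩
    obtain ⟨a, ha, h⟩ := exists_le_card_choose_two_le (isProperColoring_iff.2 hc)
    simp only [Fintype.card_fin] at ha h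
    have := le_add_of_choose_two_le ht1 ht' ha h
    omega
end

section
/- For n ≥ 4, the maximal subsets E' of edges of K_n containing no 4 edges that form a subgraph of maximum degree ≤ 2 are exactly: (a) the edge sets consisting of a star K_{1,n-1} plus one extra edge, and (b) sets of exactly three pairwise disjoint edges. -/
/-!
Call a set of four edges *bad* if every vertex lies in at most two of them.

If a maximal bad-free edge set `E` has at most three edges, it has exactly three (it cannot
be all of `K_n`), and two of them sharing a vertex `u` would lie in a bad set after adding a
missing edge at `u`, unless all edges at `u` are present, in which case `E` is a star and an
edge avoiding the centre can still be added. If `E` has at least four edges, any four of them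
have a vertex `v` of degree `≥ 3`; two distinct edges avoiding `v` would, together with two
suitable edges at `v`, form a bad set, so at most one edge `e` avoids `v`, and maximality
forces all edges at `v` into `E`. Conversely, a star plus an edge and three disjoint edges
are bad-free for the same counting reasons, and the same constructions show they are maximal.
-/

open Finset

/-- `noBad E` says that the edge set `E` of a graph on `[n]` contains no `4`
distinct edges forming a subgraph of maximum degree at most `2`. -/
def noBad (n : ℕ) (E : Finset (Finset (Fin n))) : Prop :=
  ¬ ∃ A : Fin 4 → Finset (Fin n), (∀ j, A j ∈ E) ∧ Function.Injective A ∧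
      ∀ v : Fin n, (Finset.univ.filter fun j => v ∈ A j).card ≤ 2

section General

variable {α : Type*} [DecidableEq α]

def IsBad (S : Finset (Finset α)) : Prop :=
  #S = 4 ∧ ∀ v, #{e ∈ S | v ∈ e} ≤ 2

lemma card_inter_le_one_of_card_eq_two {e f : Finset α} (he : #e = 2) (hf : #f = 2)
    (hef : e ≠ f) : #(e ∩ f) ≤ 1 := by
  by_contra! h
  exact hef ((eq_of_subset_of_card_le inter_subset_left (by omega)).symm.trans
    (eq_of_subset_of_card_le inter_subset_right (by omega)))

lemma isBad_insert {S : Finset (Finset α)} {f : Finset α} (hS : #S = 3) (hf : f ∉ S)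
    (hdisj : (S : Set (Finset α)).PairwiseDisjoint id) : IsBad (insert f S) := by
  refine ⟨by rw [card_insert_of_notMem hf, hS], fun v => ?_⟩
  have hdeg : #{e ∈ S | v ∈ e} ≤ 1 := card_le_one.mpr fun a ha b hb => by
    rw [mem_filter] at ha hb
    exact hdisj.elim_finset ha.1 hb.1 v ha.2 hb.2
  rw [filter_insert]
  split_ifs
  · exact (card_insert_le _ _).trans (by omega)
  · omega

lemma exists_disjoint_triple_iff {S : Finset (Finset α)} (hS : ∀ e ∈ S, #e = 2) :
    (∃ e₁ e₂ e₃ : Finset α, #e₁ = 2 ∧ #e₂ = 2 ∧ #e₃ = 2 ∧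
      Disjoint e₁ e₂ ∧ Disjoint e₁ e₃ ∧ Disjoint e₂ e₃ ∧ S = {e₁, e₂, e₃}) ↔
    #S = 3 ∧ (S : Set (Finset α)).PairwiseDisjoint id := by
  constructor
  · rintro ⟨e₁, e₂, e₃, h₁, h₂, -, d₁₂, d₁₃, d₂₃, rfl⟩
    have hne : ∀ {e f : Finset α}, #e = 2 → Disjoint e f → e ≠ f := fun he hef =>
      hef.ne (by rintro rfl; simp at he)
    refine ⟨card_eq_three.mpr ⟨e₁, e₂, e₃, hne h₁ d₁₂, hne h₁ d₁₃, hne h₂ d₂₃, rfl⟩, ?_⟩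
    simp [Set.pairwiseDisjoint_insert, d₁₂, d₁₃, d₂₃]
  · rintro ⟨h3, hdisj⟩
    obtain ⟨e₁, e₂, e₃, h₁₂, h₁₃, h₂₃, rfl⟩ := card_eq_three.mp h3
    exact ⟨e₁, e₂, e₃, hS _ (by simp), hS _ (by simp), hS _ (by simp),
      hdisj (by simp) (by simp) h₁₂, hdisj (by simp) (by simp) h₁₃,
      hdisj (by simp) (by simp) h₂₃, rfl⟩

/-- A vertex lying in both `a` and `b` is `v`, which avoids `g` and `h`; a vertex lying in both
`g` and `h` avoids `a` and `b`. -/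
lemma isBad_of_pairs {v : α} {g h a b : Finset α} (hgh : g ≠ h) (hab : a ≠ b)
    (hvg : v ∉ g) (hvh : v ∉ h) (hva : v ∈ a) (hvb : v ∈ b)
    (hinter : ∀ u ∈ a, u ∈ b → u = v) (ha : Disjoint a (g ∩ h)) (hb : Disjoint b (g ∩ h)) :
    IsBad {g, h, a, b} := by
  have hag : a ≠ g := by rintro rfl; exact hvg hva
  have hah : a ≠ h := by rintro rfl; exact hvh hva
  have hbg : b ≠ g := by rintro rfl; exact hvg hvb
  have hbh : b ≠ h := by rintro rfl; exact hvh hvb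
  refine ⟨by simp [card_insert_of_notMem, *, hag.symm, hah.symm, hbg.symm, hbh.symm],
    fun u => ?_⟩
  simp only [filter_insert, filter_singleton]
  have := disjoint_left.mp ha
  have := disjoint_left.mp hb
  by_cases hug : u ∈ g <;> by_cases huh : u ∈ h <;> by_cases hua : u ∈ a <;>
    by_cases hub : u ∈ b <;> simp_all [card_le_two]

end General

section Star

variable {α : Type*} [DecidableEq α] [Fintype α]

def starEdges (v : α) : Finset (Finset α) := (univ.erase v).image fun w => {v, w}

lemma mem_starEdges {v : α} {g : Finset α} : g ∈ starEdges v ↔ #g = 2 ∧ v ∈ g := by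
  constructor
  · intro hg
    obtain ⟨w, hw, rfl⟩ := mem_image.mp hg
    exact ⟨card_pair (ne_of_mem_erase hw).symm, mem_insert_self _ _⟩
  · rintro ⟨hg, hv⟩
    obtain ⟨x, y, hxy, rfl⟩ := card_eq_two.mp hg
    rcases mem_insert.mp hv with rfl | hv
    · exact mem_image.mpr ⟨y, mem_erase.mpr ⟨hxy.symm, mem_univ _⟩, rfl⟩
    · rw [mem_singleton.mp hv, pair_comm]
      exact mem_image.mpr ⟨x, mem_erase.mpr ⟨hxy, mem_univ _⟩, rfl⟩

lemma card_starEdges (v : α) : #(starEdges v) = Fintype.card α - 1 := by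
  rw [starEdges, card_image_of_injOn, card_erase_of_mem (mem_univ v), card_univ]
  intro x hx y _ hxy
  have : x ∈ ({v, y} : Finset α) := by
    rw [← show ({v, x} : Finset α) = {v, y} from hxy]
    exact mem_insert_of_mem (mem_singleton_self x)
  exact mem_singleton.mp ((mem_insert.mp this).resolve_left (ne_of_mem_erase hx))

end Star

variable {n : ℕ} {E : Finset (Finset (Fin n))}

lemma noBad_iff : noBad n E ↔ ∀ S ⊆ E, ¬ IsBad S := by
  have key : ∀ A : Fin 4 → Finset (Fin n), Function.Injective A →
      (IsBad (univ.image A) ↔ ∀ v, #{j | v ∈ A j} ≤ 2) := fun A hA => by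
    simp only [IsBad, filter_image, card_image_of_injective _ hA, card_univ, Fintype.card_fin,
      true_and]
  constructor
  · rintro hnb S hSE hS
    set e := S.equivFinOfCardEq hS.1
    have hA : Function.Injective fun j => (e.symm j).1 :=
      Subtype.val_injective.comp e.symm.injective
    have himage : univ.image (fun j => (e.symm j).1) = S := by
      ext x
      refine ⟨fun hx => ?_, fun hx => mem_image.mpr ⟨e ⟨x, hx⟩, mem_univ _, by simp⟩⟩
      obtain ⟨j, -, rfl⟩ := mem_image.mp hx
      exact (e.symm j).2
    exact hnb ⟨_, fun j => hSE (e.symm j).2, hA, (key _ hA).mp (himage.symm ▸ hS)⟩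
  · rintro h ⟨A, hAE, hA, hdeg⟩
    exact h _ (image_subset_iff.mpr fun j _ => hAE j) ((key A hA).mpr hdeg)

lemma noBad_of_card_le_three (h : #E ≤ 3) : noBad n E :=
  noBad_iff.mpr fun S hSE hS => by have := card_le_card hSE; have := hS.1; omega

lemma noBad_of_forall_mem_or_eq {v : Fin n} {e : Finset (Fin n)}
    (hE : ∀ g ∈ E, v ∈ g ∨ g = e) : noBad n E := by
  refine noBad_iff.mpr fun S hSE ⟨hS, hdeg⟩ => ?_
  have havoid : #{g ∈ S | v ∉ g} ≤ 1 := card_le_one.mpr fun a ha b hb => by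
    rw [mem_filter] at ha hb
    rw [(hE a (hSE ha.1)).resolve_left ha.2, (hE b (hSE hb.1)).resolve_left hb.2]
  have := card_filter_add_card_filter_not (s := S) (fun g => v ∈ g)
  have := hdeg v
  omega

lemma exists_two_lt_card_filter_mem_of_noBad (h : noBad n E) (hE : 4 ≤ #E) :
    ∃ v, 2 < #{e ∈ E | v ∈ e} := by
  obtain ⟨S, hSE, hS⟩ := exists_subset_card_eq hE
  obtain ⟨v, hv⟩ : ∃ v, 2 < #{e ∈ S | v ∈ e} := by
    by_contra! hdeg
    exact noBad_iff.mp h S hSE ⟨hS, hdeg⟩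
  exact ⟨v, hv.trans_le (card_le_card (filter_subset_filter _ hSE))⟩

/-- `g ∩ h` has at most one vertex, so at most one edge at `v` meets it; two of the remaining
edges at `v` form a bad set together with `g` and `h`. -/
lemma not_noBad_of_two_avoiding (hE : ∀ e ∈ E, #e = 2) {v : Fin n}
    (hv : 2 < #{e ∈ E | v ∈ e}) {g h : Finset (Fin n)} (hg : g ∈ E) (hh : h ∈ E)
    (hgh : g ≠ h) (hvg : v ∉ g) (hvh : v ∉ h) : ¬ noBad n E := by
  set D := {e ∈ E | v ∈ e}
  have hgh1 := card_le_one.mp (card_inter_le_one_of_card_eq_two (hE g hg) (hE h hh) hgh)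
  have hmeet : #{e ∈ D | ¬Disjoint e (g ∩ h)} ≤ 1 := card_le_one.mpr fun a ha b hb => by
    simp only [D, mem_filter, not_disjoint_iff] at ha hb
    obtain ⟨⟨haE, hva⟩, x, hxa, hx⟩ := ha
    obtain ⟨⟨hbE, hvb⟩, y, hyb, hy⟩ := hb
    obtain rfl := hgh1 x hx y hy
    by_contra hab
    have hxv : x ≠ v := by rintro rfl; exact hvg (mem_inter.mp hx).1
    have := card_le_one.mp (card_inter_le_one_of_card_eq_two (hE a haE) (hE b hbE) hab)
    exact hxv (this x (mem_inter.mpr ⟨hxa, hyb⟩) v (mem_inter.mpr ⟨hva, hvb⟩))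
  have := card_filter_add_card_filter_not (s := D) (fun e => Disjoint e (g ∩ h))
  obtain ⟨a, ha, b, hb, hab⟩ := one_lt_card.mp (show 1 < #{e ∈ D | Disjoint e (g ∩ h)} by omega)
  simp only [D, mem_filter] at ha hb
  have hab1 := card_le_one.mp (card_inter_le_one_of_card_eq_two (hE a ha.1.1) (hE b hb.1.1) hab)
  intro hnb
  refine noBad_iff.mp hnb {g, h, a, b} ?_ (isBad_of_pairs hgh hab hvg hvh ha.1.2 hb.1.2
    (fun u hua hub => hab1 u (mem_inter.mpr ⟨hua, hub⟩) v (mem_inter.mpr ⟨ha.1.2, hb.1.2⟩))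
    ha.2 hb.2)
  simp [insert_subset_iff, hg, hh, ha.1.1, hb.1.1]

def IsMaximalNoBad (n : ℕ) (E : Finset (Finset (Fin n))) : Prop :=
  noBad n E ∧ ∀ f : Finset (Fin n), f.card = 2 → f ∉ E → ¬ noBad n (insert f E)

namespace IsMaximalNoBad

lemma exists_notMem (hmax : IsMaximalNoBad n E) (hn : 3 ≤ n) (v : Fin n) : ∃ e ∈ E, v ∉ e := by
  by_contra! hall
  obtain ⟨a, ha, b, hb, hab⟩ := one_lt_card.mp (show 1 < #(univ.erase v) by
    rw [card_erase_of_mem (mem_univ v), card_univ, Fintype.card_fin]; omega)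
  have hvf : v ∉ ({a, b} : Finset (Fin n)) := by
    simp [(ne_of_mem_erase ha).symm, (ne_of_mem_erase hb).symm]
  refine hmax.2 {a, b} (card_pair hab) (fun h => hvf (hall _ h))
    (noBad_of_forall_mem_or_eq (v := v) (e := {a, b}) fun g hg => ?_)
  rcases mem_insert.mp hg with rfl | hg
  exacts [Or.inr rfl, Or.inl (hall g hg)]

lemma card_eq_three (hmax : IsMaximalNoBad n E) (hn : 3 ≤ n) (h : #E ≤ 3) : #E = 3 := by
  by_contra hne
  have hlt : #E < #(univ.powersetCard 2 : Finset (Finset (Fin n))) := by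
    rw [card_powersetCard, card_univ, Fintype.card_fin]
    exact lt_of_lt_of_le (by omega) (show 3 ≤ n.choose 2 from Nat.choose_le_choose 2 hn)
  obtain ⟨f, hf, hfE⟩ := exists_mem_notMem_of_card_lt_card hlt
  exact hmax.2 f (mem_powersetCard.mp hf).2 hfE
    (noBad_of_card_le_three ((card_insert_le _ _).trans (by omega)))

lemma pairwiseDisjoint (hmax : IsMaximalNoBad n E) (hn : 4 ≤ n) (h3 : #E = 3) :
    (E : Set (Finset (Fin n))).PairwiseDisjoint id := by
  intro a ha b hb hab
  rw [Function.onFun, id, id, disjoint_left]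
  intro u hua hub
  by_cases hstar : starEdges u ⊆ E
  · have hEu : E = starEdges u :=
      (eq_of_subset_of_card_le hstar (by rw [card_starEdges, Fintype.card_fin]; omega)).symm
    obtain ⟨e, he, hue⟩ := hmax.exists_notMem (by omega) u
    rw [hEu, mem_starEdges] at he
    exact hue he.2
  · obtain ⟨f, hf, hfE⟩ := not_subset.mp hstar
    rw [mem_starEdges] at hf
    refine hmax.2 f hf.1 hfE (noBad_iff.mpr fun S hS hbad => ?_)
    have hSeq : S = insert f E :=
      eq_of_subset_of_card_le hS (by rw [card_insert_of_notMem hfE, h3, hbad.1])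
    have hfa : f ≠ a := by rintro rfl; exact hfE ha
    have hfb : f ≠ b := by rintro rfl; exact hfE hb
    have : 2 < #{e ∈ S | u ∈ e} := two_lt_card.mpr ⟨f, by simp [hSeq, hf.2], a,
      by simp [hSeq, mem_coe.mp ha, hua], b, by simp [hSeq, mem_coe.mp hb, hub], hfa, hfb, hab⟩
    exact absurd (hbad.2 u) (by omega)

lemma eq_starEdges_union (hmax : IsMaximalNoBad n E) (hE : ∀ e ∈ E, #e = 2) {v : Fin n}
    {e : Finset (Fin n)} (he : e ∈ E) (hunique : ∀ g ∈ E, v ∉ g → g = e) :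
    E = starEdges v ∪ {e} := by
  ext g
  rw [mem_union, mem_singleton, mem_starEdges]
  constructor
  · intro hg
    by_cases hvg : v ∈ g
    exacts [Or.inl ⟨hE g hg, hvg⟩, Or.inr (hunique g hg hvg)]
  · rintro (⟨hg, hvg⟩ | rfl)
    · by_contra hgE
      refine hmax.2 g hg hgE (noBad_of_forall_mem_or_eq (v := v) (e := e) fun x hx => ?_)
      rcases mem_insert.mp hx with rfl | hx
      · exact Or.inl hvg
      · by_cases hvx : v ∈ x
        exacts [Or.inl hvx, Or.inr (hunique x hx hvx)]
    · exact he

lemma exists_eq_starEdges_union (hmax : IsMaximalNoBad n E) (hn : 3 ≤ n)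
    (hE : ∀ e ∈ E, #e = 2) (h : 3 < #E) :
    ∃ v e, #e = 2 ∧ v ∉ e ∧ E = starEdges v ∪ {e} := by
  obtain ⟨v, hdeg⟩ := exists_two_lt_card_filter_mem_of_noBad hmax.1 h
  obtain ⟨e, he, hve⟩ := hmax.exists_notMem hn v
  have hunique : ∀ g ∈ E, v ∉ g → g = e := fun g hg hvg => by
    by_contra hne
    exact not_noBad_of_two_avoiding hE hdeg hg he hne hvg hve hmax.1
  exact ⟨v, e, hE e he, hve, hmax.eq_starEdges_union hE he hunique⟩

end IsMaximalNoBad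

lemma isMaximalNoBad_starEdges_union (hn : 4 ≤ n) {v : Fin n} {e : Finset (Fin n)}
    (he : #e = 2) (hve : v ∉ e) : IsMaximalNoBad n (starEdges v ∪ {e}) := by
  refine ⟨noBad_of_forall_mem_or_eq (v := v) (e := e) fun g hg => ?_, fun f hf hfE => ?_⟩
  · rw [mem_union, mem_singleton, mem_starEdges] at hg
    exact hg.imp_left And.right
  have hvf : v ∉ f := fun hvf => hfE (mem_union_left _ (mem_starEdges.mpr ⟨hf, hvf⟩))
  have hcard : ∀ g ∈ insert f (starEdges v ∪ {e}), #g = 2 := by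
    intro g hg
    rw [mem_insert, mem_union, mem_singleton, mem_starEdges] at hg
    rcases hg with rfl | hg | rfl
    exacts [hf, hg.1, he]
  have hdeg : 2 < #{g ∈ insert f (starEdges v ∪ {e}) | v ∈ g} := by
    refine lt_of_lt_of_le ?_ (card_le_card (s := starEdges v) fun g hg => ?_)
    · rw [card_starEdges, Fintype.card_fin]; omega
    · exact mem_filter.mpr ⟨mem_insert_of_mem (mem_union_left _ hg), (mem_starEdges.mp hg).2⟩
  have heE : e ∈ starEdges v ∪ {e} := mem_union_right _ (mem_singleton_self e)
  exact not_noBad_of_two_avoiding hcard hdeg (mem_insert_of_mem heE) (mem_insert_self f _)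
    (by rintro rfl; exact hfE heE) hve hvf

lemma isMaximalNoBad_of_pairwiseDisjoint (h3 : #E = 3)
    (hdisj : (E : Set (Finset (Fin n))).PairwiseDisjoint id) : IsMaximalNoBad n E :=
  ⟨noBad_of_card_le_three h3.le, fun _ _ hfE hnb =>
    noBad_iff.mp hnb _ subset_rfl (isBad_insert h3 hfE hdisj)⟩

/-- For `n ≥ 4`, a set `E'` of edges of `K_n` is maximal with the property of
containing no `4` edges that form a subgraph of maximum degree `≤ 2` **iff**
it is either (a) a star `K_{1,n-1}` plus one extra edge (not incident to the
star's center), or (b) a set of exactly three pairwise disjoint edges. -/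
theorem maximal_noBad_characterization (n : ℕ) (hn : 4 ≤ n)
    (E' : Finset (Finset (Fin n))) (hE : ∀ e ∈ E', e.card = 2) :
    (noBad n E' ∧ ∀ f : Finset (Fin n), f.card = 2 → f ∉ E' →
        ¬ noBad n (insert f E'))
    ↔ ((∃ v : Fin n, ∃ e : Finset (Fin n), e.card = 2 ∧ v ∉ e ∧
          E' = ((Finset.univ.erase v).image fun w => ({v, w} : Finset (Fin n))) ∪ {e}) ∨
        (∃ e₁ e₂ e₃ : Finset (Fin n), e₁.card = 2 ∧ e₂.card = 2 ∧ e₃.card = 2 ∧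
          Disjoint e₁ e₂ ∧ Disjoint e₁ e₃ ∧ Disjoint e₂ e₃ ∧
          E' = {e₁, e₂, e₃})) := by
  change IsMaximalNoBad n E' ↔ (∃ v e, #e = 2 ∧ v ∉ e ∧ E' = starEdges v ∪ {e}) ∨ _
  rw [exists_disjoint_triple_iff hE]
  constructor
  · intro hmax
    rcases le_or_gt #E' 3 with hsmall | hlarge
    · have h3 := hmax.card_eq_three (by omega) hsmall
      exact Or.inr ⟨h3, hmax.pairwiseDisjoint hn h3⟩
    · exact Or.inl (hmax.exists_eq_starEdges_union (by omega) hE hlarge)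
  · rintro (⟨v, e, he, hve, rfl⟩ | ⟨h3, hdisj⟩)
    exacts [isMaximalNoBad_starEdges_union hn he hve, isMaximalNoBad_of_pairwiseDisjoint h3 hdisj]
end

section
/- Let K = K' * v₀ be a finite simplicial cone. The maps D_k : C_k(K) → C_{k+1}(K), defined on oriented simplices by D(σ) = v₀ * σ if v₀ ∉ σ and D(σ) = 0 otherwise, form a chain homotopy between the identity chain map and the chain map induced by the constant simplicial map to v₀; i.e., ∂D + D∂ = id_♯ - a_♯. -/
open Finset

/-- Simplicial boundary operator on chains over the ordered vertex set `Fin N`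
(chains are `Finset (Fin N) → ℤ`; `∂` vanishes on vertices and the empty set). -/
noncomputable def bdry (N : ℕ) : (Finset (Fin N) → ℤ) →ₗ[ℤ] (Finset (Fin N) → ℤ) :=
  (Pi.basisFun ℤ (Finset (Fin N))).constr ℤ fun σ =>
    if σ.card ≤ 1 then 0
    else ∑ i ∈ σ, ((-1 : ℤ) ^ ((σ.filter (· < i)).card)) • Pi.single (σ.erase i) (1 : ℤ)

/-- The cone operator `D(σ) = v₀ * σ` if `v₀ ∉ σ`, `D(σ) = 0` otherwise; the sign
`(-1)^{#{w ∈ σ : w < v₀}}` expresses the oriented simplex `[v₀, σ]` in terms of the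
increasingly-ordered basis simplex `insert v₀ σ`. -/
noncomputable def coneD (N : ℕ) (v₀ : Fin N) :
    (Finset (Fin N) → ℤ) →ₗ[ℤ] (Finset (Fin N) → ℤ) :=
  (Pi.basisFun ℤ (Finset (Fin N))).constr ℤ fun σ =>
    if v₀ ∈ σ then 0
    else ((-1 : ℤ) ^ ((σ.filter (· < v₀)).card)) • Pi.single (insert v₀ σ) (1 : ℤ)

/-- The chain map induced by the constant simplicial map to the apex `v₀`: it sends
each vertex to `v₀` and kills all simplices of positive dimension (degenerate). -/
noncomputable def aSharp (N : ℕ) (v₀ : Fin N) :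
    (Finset (Fin N) → ℤ) →ₗ[ℤ] (Finset (Fin N) → ℤ) :=
  (Pi.basisFun ℤ (Finset (Fin N))).constr ℤ fun σ =>
    if σ.card = 1 then Pi.single ({v₀} : Finset (Fin N)) (1 : ℤ) else 0

lemma constr_single {N : ℕ} (f : Finset (Fin N) → (Finset (Fin N) → ℤ)) (σ : Finset (Fin N)) :
    ((Pi.basisFun ℤ (Finset (Fin N))).constr ℤ f) (Pi.single σ 1) = f σ := by
  rw [← Pi.basisFun_apply, Module.Basis.constr_basis]

lemma bdry_single {N : ℕ} (σ : Finset (Fin N)) :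
    bdry N (Pi.single σ 1) = if σ.card ≤ 1 then 0
      else ∑ i ∈ σ, ((-1 : ℤ) ^ ((σ.filter (· < i)).card)) • Pi.single (σ.erase i) (1 : ℤ) :=
  constr_single _ σ

lemma coneD_single {N : ℕ} (v₀ : Fin N) (σ : Finset (Fin N)) :
    coneD N v₀ (Pi.single σ 1) = if v₀ ∈ σ then 0
      else ((-1 : ℤ) ^ ((σ.filter (· < v₀)).card)) • Pi.single (insert v₀ σ) (1 : ℤ) :=
  constr_single _ σ

lemma aSharp_single {N : ℕ} (v₀ : Fin N) (σ : Finset (Fin N)) :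
    aSharp N v₀ (Pi.single σ 1) =
      if σ.card = 1 then Pi.single ({v₀} : Finset (Fin N)) (1 : ℤ) else 0 :=
  constr_single _ σ

lemma signA_pow {N : ℕ} {σ : Finset (Fin N)} {v₀ i : Fin N} (hv : v₀ ∉ σ) :
    ((-1 : ℤ)) ^ ((insert v₀ σ).filter (· < i)).card
      = (if v₀ < i then -1 else 1) * (-1 : ℤ) ^ ((σ.filter (· < i)).card) := by
  rw [filter_insert]
  by_cases h : v₀ < i
  · rw [if_pos h, if_pos h,
      card_insert_of_notMem (fun hm => hv (mem_filter.1 hm).1), pow_succ]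
    ring
  · rw [if_neg h, if_neg h, one_mul]

lemma signB_pow {N : ℕ} {σ : Finset (Fin N)} {v₀ i : Fin N} (hi : i ∈ σ) :
    ((-1 : ℤ)) ^ ((σ.erase i).filter (· < v₀)).card
      = (if i < v₀ then -1 else 1) * (-1 : ℤ) ^ ((σ.filter (· < v₀)).card) := by
  rw [filter_erase]
  by_cases h : i < v₀
  · have hm : i ∈ σ.filter (· < v₀) := mem_filter.2 ⟨hi, h⟩
    have hc : (σ.filter (· < v₀)).card = ((σ.filter (· < v₀)).erase i).card + 1 := by
      rw [card_erase_of_mem hm]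
      have : 0 < (σ.filter (· < v₀)).card := card_pos.2 ⟨i, hm⟩
      omega
    rw [if_pos h, hc, pow_succ]
    ring
  · have hnm : i ∉ σ.filter (· < v₀) := fun hm => h (mem_filter.1 hm).2
    rw [if_neg h, erase_eq_of_notMem hnm, one_mul]

/-- **The cone operator is a chain homotopy between the identity and the constant
map to the apex:** for every face `σ` of a simplicial cone `K = K' * v₀`,
`(∂D + D∂)(σ) = σ - a_♯(σ)`. -/
theorem cone_chain_homotopy (N : ℕ) (K : Finset (Fin N) → Prop)
    (hdown : ∀ σ τ : Finset (Fin N), K σ → τ ⊆ σ → τ.Nonempty → K τ)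
    (hfaces : ∀ σ, K σ → σ.Nonempty)
    (v₀ : Fin N) (hv₀ : K {v₀}) (hcone : ∀ σ, K σ → K (insert v₀ σ)) :
    ∀ σ : Finset (Fin N), K σ →
      bdry N (coneD N v₀ (Pi.single σ 1)) + coneD N v₀ (bdry N (Pi.single σ 1))
        = Pi.single σ 1 - aSharp N v₀ (Pi.single σ 1) := by
  intro σ hK
  have hne : σ.Nonempty := hfaces σ hK
  have hpos : 0 < σ.card := card_pos.2 hne
  by_cases hv : v₀ ∈ σ
  · rw [coneD_single, if_pos hv, map_zero, zero_add]
    by_cases hc1 : σ.card ≤ 1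
    · obtain ⟨w, hw⟩ := card_eq_one.1 (le_antisymm hc1 hpos)
      have hwv : w = v₀ := by
        subst hw; exact (mem_singleton.1 hv).symm
      subst hwv; subst hw
      rw [bdry_single, if_pos (by simp), map_zero, aSharp_single, if_pos (card_singleton _)]
      simp
    · rw [bdry_single, if_neg hc1, map_sum, aSharp_single, if_neg (by omega), sub_zero]
      rw [Finset.sum_eq_single_of_mem v₀ hv (fun i hi hne' => by
        rw [map_smul, coneD_single, if_pos (mem_erase.2 ⟨Ne.symm hne', hv⟩), smul_zero])]
      have hnm : v₀ ∉ σ.filter (· < v₀) := fun hm => absurd (mem_filter.1 hm).2 (lt_irrefl v₀)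
      rw [map_smul, coneD_single, if_neg (notMem_erase v₀ σ), filter_erase,
        erase_eq_of_notMem hnm, insert_erase hv, smul_smul, ← pow_add,
        Even.neg_one_pow ⟨_, rfl⟩, one_smul]
  · rw [coneD_single, if_neg hv, map_smul, bdry_single (insert v₀ σ)]
    have hcard : (insert v₀ σ).card = σ.card + 1 := card_insert_of_notMem hv
    rw [if_neg (by omega), Finset.sum_insert hv]
    have hfv : ((insert v₀ σ).filter (· < v₀)).card = (σ.filter (· < v₀)).card := by
      rw [filter_insert, if_neg (lt_irrefl v₀)]
    rw [hfv, erase_insert hv]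
    by_cases hc1 : σ.card ≤ 1
    · -- σ is a single vertex w ≠ v₀
      obtain ⟨w, hw⟩ := card_eq_one.1 (le_antisymm hc1 hpos)
      subst hw
      have hwv : w ≠ v₀ := fun h => hv (h ▸ mem_singleton_self w)
      rw [bdry_single, if_pos (by simp), map_zero, add_zero, aSharp_single,
        if_pos (card_singleton _), Finset.sum_singleton]
      have her : (insert v₀ {w} : Finset (Fin N)).erase w = {v₀} := by
        rw [erase_insert_of_ne (Ne.symm hwv), erase_singleton]
        rfl
      rw [her]
      rcases lt_or_gt_of_ne hwv with h | h
      · simp [filter_insert, filter_singleton, h, asymm h, lt_irrefl, smul_add, smul_smul,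
          sub_eq_add_neg]
      · simp [filter_insert, filter_singleton, asymm h, h, lt_irrefl, smul_add, smul_smul,
          sub_eq_add_neg]
    · rw [bdry_single σ, if_neg hc1, map_sum, aSharp_single, if_neg (by omega), sub_zero,
        smul_add, smul_smul, ← pow_add, Even.neg_one_pow ⟨_, rfl⟩, one_smul, Finset.smul_sum]
      simp only [map_smul]
      rw [add_assoc, ← Finset.sum_add_distrib, add_eq_left]
      apply Finset.sum_eq_zero
      intro i hi
      have hiv : i ≠ v₀ := fun h => hv (h ▸ hi)
      have hvnm : v₀ ∉ σ.erase i := fun h => hv (mem_of_mem_erase h)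
      rw [coneD_single, if_neg hvnm, erase_insert_of_ne (Ne.symm hiv),
        smul_smul, smul_smul, signA_pow hv, signB_pow hi, ← add_smul]
      have hz : (-1 : ℤ) ^ ((σ.filter (· < v₀)).card) *
            ((if v₀ < i then -1 else 1) * (-1 : ℤ) ^ ((σ.filter (· < i)).card))
          + (-1 : ℤ) ^ ((σ.filter (· < i)).card) *
            ((if i < v₀ then -1 else 1) * (-1 : ℤ) ^ ((σ.filter (· < v₀)).card)) = 0 := by
        rcases lt_or_gt_of_ne hiv with h | h
        · rw [if_neg (asymm h), if_pos h]; ring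
        · rw [if_pos h, if_neg (asymm h)]; ring
      rw [hz, zero_smul]
end

section
/- Let p be a prime and let ν be a chain self-map of the chain complex (with coefficients in ℤ or ℤ/p) of a finite simplicial complex equipped with a free simplicial ℤ/p-action, and suppose ν is ℤ/p-equivariant. Then the Lefschetz number of ν is divisible by p. -/
open Finset

/-- The orientation sign of the simplicial automorphism `φ` on the simplex `σ`:
the sign of the permutation of the positions obtained by sorting the images, so
that the induced chain map sends the increasingly-ordered basis simplex `σ` to
`chainSign φ σ • (image of σ)`. -/
noncomputable def chainSign {N : ℕ} (φ : Equiv.Perm (Fin N)) (σ : Finset (Fin N)) : ℤ :=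
  ((Equiv.Perm.sign
    ((σ.orderIsoOfFin rfl).toEquiv.trans
      ((Equiv.subtypeEquiv (φ : Fin N ≃ Fin N) (fun x => by
          constructor
          · intro hx; exact Finset.mem_image_of_mem _ hx
          · intro hx
            rcases Finset.mem_image.mp hx with ⟨y, hy, hxy⟩
            rwa [← φ.injective hxy])).trans
        (((σ.image φ).orderIsoOfFin rfl).toEquiv.symm.trans
          (finCongr (Finset.card_image_of_injective σ φ.injective)))))) : ℤˣ) 

/-- The chain map induced by the simplicial automorphism `φ`. -/
noncomputable def phiSharp {N : ℕ} (φ : Equiv.Perm (Fin N)) :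
    (Finset (Fin N) → ℤ) →ₗ[ℤ] (Finset (Fin N) → ℤ) :=
  (Pi.basisFun ℤ (Finset (Fin N))).constr ℤ fun σ =>
    chainSign φ σ • Pi.single (σ.image φ) (1 : ℤ)

lemma chainSign_ne_zero {N : ℕ} (φ : Equiv.Perm (Fin N)) (σ : Finset (Fin N)) :
    chainSign φ σ ≠ 0 := Units.ne_zero _

lemma phiSharp_single {N : ℕ} (φ : Equiv.Perm (Fin N)) (σ : Finset (Fin N)) :
    phiSharp φ (Pi.single σ 1) = chainSign φ σ • Pi.single (σ.image φ) (1 : ℤ) := by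
  have := Module.Basis.constr_basis (Pi.basisFun ℤ (Finset (Fin N))) ℤ
    (fun σ : Finset (Fin N) =>
      (chainSign φ σ • Pi.single (σ.image φ) (1 : ℤ) : Finset (Fin N) → ℤ)) σ
  simpa [phiSharp, Pi.basisFun_apply] using this

lemma phiSharp_apply_image {N : ℕ} (φ : Equiv.Perm (Fin N)) (x : Finset (Fin N) → ℤ)
    (σ : Finset (Fin N)) : phiSharp φ x (σ.image φ) = chainSign φ σ * x σ := by
  have h : (LinearMap.proj (σ.image φ) ∘ₗ phiSharp φ : (Finset (Fin N) → ℤ) →ₗ[ℤ] ℤ)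
      = chainSign φ σ • LinearMap.proj σ := by
    apply Module.Basis.ext (Pi.basisFun ℤ (Finset (Fin N)))
    intro τ
    simp only [LinearMap.comp_apply, LinearMap.proj_apply, Pi.basisFun_apply,
      phiSharp_single, LinearMap.smul_apply, Pi.smul_apply, smul_eq_mul]
    by_cases hτ : τ = σ
    · subst hτ; simp
    · have h1 : σ.image φ ≠ τ.image φ := fun h =>
        hτ ((Finset.image_injective φ.injective h)).symm
      rw [Pi.single_eq_of_ne h1, Pi.single_eq_of_ne (Ne.symm hτ)]
      ring
  have := congrArg (fun L => (L : (Finset (Fin N) → ℤ) →ₗ[ℤ] ℤ) x) h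
  simpa using this

lemma orbit_div {α : Type*} [DecidableEq α] (p : ℕ) (hp : 0 < p) (g : α → α)
    (hginj : Function.Injective g) (hgp : ∀ a, g^[p] a = a) (f : α → ℤ) :
    ∀ n (S : Finset α), S.card ≤ n → (∀ a ∈ S, g a ∈ S) →
      (∀ j, 0 < j → j < p → ∀ a ∈ S, g^[j] a ≠ a) →
      (∀ a ∈ S, f (g a) = f a) →
      (p : ℤ) ∣ ∑ a ∈ S, f a := by
  intro n
  induction n with
  | zero =>
    intro S hcard _ _ _
    rw [Finset.card_eq_zero.mp (Nat.le_zero.mp hcard)]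
    simp
  | succ n ih =>
    intro S hcard hS hfr hf
    rcases S.eq_empty_or_nonempty with rfl | ⟨a, ha⟩
    · simp
    have hmem : ∀ j, ∀ b ∈ S, g^[j] b ∈ S := by
      intro j
      induction j with
      | zero => intro b hb; simpa using hb
      | succ j ihj =>
        intro b hb
        rw [Function.iterate_succ_apply']
        exact hS _ (ihj b hb)
    have hfit : ∀ j, ∀ b ∈ S, f (g^[j] b) = f b := by
      intro j
      induction j with
      | zero => intro b hb; simp
      | succ j ihj =>
        intro b hb
        rw [Function.iterate_succ_apply', hf _ (hmem j b hb), ihj b hb]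
    have hlt : ∀ i j : ℕ, i < j → j < p → g^[i] a ≠ g^[j] a := by
      intro i j hij hjp heq
      have h1 : g^[p - j] (g^[j] a) = a := by
        rw [← Function.iterate_add_apply]
        rw [Nat.sub_add_cancel (le_of_lt hjp)]
        exact hgp a
      have h2 : g^[p - j + i] a = a := by
        rw [Function.iterate_add_apply, heq]
        exact h1
      exact hfr (p - j + i) (by omega) (by omega) a ha h2
    have hinj : Set.InjOn (fun j => g^[j] a) (Finset.range p) := by
      intro i hi j hj hij
      simp only [Finset.coe_range, Set.mem_Iio] at hi hj
      rcases lt_trichotomy i j with h | h | h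
      · exact absurd hij (hlt i j h hj)
      · exact h
      · exact absurd hij.symm (hlt j i h hi)
    set O : Finset α := (Finset.range p).image (fun j => g^[j] a) with hO
    have hOS : O ⊆ S := by
      intro b hb
      rcases Finset.mem_image.mp hb with ⟨j, _, rfl⟩
      exact hmem j a ha
    have hcardO : O.card = p := by
      rw [hO, Finset.card_image_of_injOn hinj, Finset.card_range]
    have hsumO : ∑ b ∈ O, f b = p * f a := by
      rw [hO, Finset.sum_image hinj]
      rw [Finset.sum_congr rfl (fun j _ => hfit j a ha)]
      simp [mul_comm]
    have haO : a ∈ O := by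
      apply Finset.mem_image.mpr
      exact ⟨0, Finset.mem_range.mpr hp, rfl⟩
    have hS' : ∀ b ∈ S \ O, g b ∈ S \ O := by
      intro b hb
      rcases Finset.mem_sdiff.mp hb with ⟨hbS, hbO⟩
      refine Finset.mem_sdiff.mpr ⟨hS b hbS, fun hgO => hbO ?_⟩
      rcases Finset.mem_image.mp hgO with ⟨j, hj, hje⟩
      have hjp := Finset.mem_range.mp hj
      rcases Nat.eq_zero_or_pos j with rfl | hj0
      · -- g b = a, so b = g^[p-1] a
        have h1 : g (g^[p - 1] a) = a := by
          have := hgp a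
          rwa [show p = (p - 1) + 1 by omega, Function.iterate_succ_apply'] at this
        have h2 : g (g^[p - 1] a) = g b := by rw [h1, ← hje]; rfl
        have hb' : b = g^[p - 1] a := (hginj h2).symm
        rw [hb']
        exact Finset.mem_image.mpr ⟨p - 1, Finset.mem_range.mpr (by omega), rfl⟩
      · have h1 : g (g^[j - 1] a) = g^[j] a := by
          conv_rhs => rw [show j = (j - 1) + 1 by omega]
          rw [Function.iterate_succ_apply']
        have h2 : g (g^[j - 1] a) = g b := by rw [h1, hje]
        have hb' : b = g^[j - 1] a := (hginj h2).symm
        rw [hb']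
        exact Finset.mem_image.mpr ⟨j - 1, Finset.mem_range.mpr (by omega),
          rfl⟩
    have hcard' : (S \ O).card ≤ n := by
      rw [Finset.card_sdiff_of_subset hOS, hcardO]
      omega
    have hdvd' : (p : ℤ) ∣ ∑ b ∈ S \ O, f b :=
      ih (S \ O) hcard' hS'
        (fun j hj1 hj2 b hb => hfr j hj1 hj2 b (Finset.mem_sdiff.mp hb).1)
        (fun b hb => hf b (Finset.mem_sdiff.mp hb).1)
    have hsplit : ∑ b ∈ S, f b = ∑ b ∈ S \ O, f b + ∑ b ∈ O, f b :=
      (Finset.sum_sdiff hOS).symm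
    rw [hsplit, hsumO]
    exact dvd_add hdvd' (Dvd.intro _ rfl)

/-- **Equivariant chain self-maps of free `ℤ/p`-complexes have Lefschetz number
divisible by `p`.**  `K` is a finite simplicial complex on `Fin N`, `φ` a simplicial
automorphism of `K` generating a `ℤ/p`-action (`φ^p = 1`) that is free (no nonempty
face is mapped to itself by a nontrivial power of `φ`).  A graded chain self-map
`ν` of `C(K)` (encoded on the full chain groups, supported on the faces of `K`,
commuting with the boundary on `K`) which commutes with the induced chain action
`phiSharp φ` on the chains of `K` has `p ∣ Λ(ν) = Σ_k (-1)^k tr(ν_k)`. -/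
theorem lefschetz_equivariant_divisible (N p : ℕ) (hp : p.Prime)
    (K : Finset (Fin N) → Prop)
    (hdown : ∀ σ τ : Finset (Fin N), K σ → τ ⊆ σ → τ.Nonempty → K τ)
    (hfaces : ∀ σ, K σ → σ.Nonempty)
    (φ : Equiv.Perm (Fin N)) (hφK : ∀ σ, K σ → K (σ.image φ)) (hφp : φ ^ p = 1)
    (hfree : ∀ j : ℕ, 0 < j → j < p → ∀ σ : Finset (Fin N), K σ → σ.Nonempty →
      σ.image (⇑(φ ^ j)) ≠ σ)
    (ν : ℕ → (Finset (Fin N) → ℤ) →ₗ[ℤ] (Finset (Fin N) → ℤ))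
    (hsupp₁ : ∀ k (σ : Finset (Fin N)), ¬ (K σ ∧ σ.card = k + 1) →
      ν k (Pi.single σ 1) = 0)
    (hsupp₂ : ∀ k (σ τ : Finset (Fin N)), ¬ (K τ ∧ τ.card = k + 1) →
      ν k (Pi.single σ 1) τ = 0)
    (hchain : ∀ k (σ : Finset (Fin N)), K σ → σ.card = k + 2 →
      bdry N (ν (k + 1) (Pi.single σ 1)) = ν k (bdry N (Pi.single σ 1)))
    (hequiv : ∀ k (σ : Finset (Fin N)), K σ → σ.card = k + 1 →
      ν k (phiSharp φ (Pi.single σ 1)) = phiSharp φ (ν k (Pi.single σ 1))) :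
    (p : ℤ) ∣ ∑ k ∈ Finset.range N, (-1 : ℤ) ^ k * LinearMap.trace ℤ _ (ν k) := by
  classical
  -- iterates of the image map are images of powers
  have hgiter : ∀ (j : ℕ) (σ : Finset (Fin N)),
      (Finset.image ⇑φ)^[j] σ = σ.image ⇑(φ ^ j) := by
    intro j
    induction j with
    | zero => intro σ; simp
    | succ j ihj =>
      intro σ
      rw [Function.iterate_succ_apply', ihj, Finset.image_image, pow_succ',
        Equiv.Perm.coe_mul]
  have hgp : ∀ σ : Finset (Fin N), (Finset.image ⇑φ)^[p] σ = σ := by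
    intro σ
    rw [hgiter, hφp]
    simp
  apply Finset.dvd_sum
  intro k _
  apply Dvd.dvd.mul_left
  -- trace as sum of diagonal entries
  have htr : LinearMap.trace ℤ _ (ν k)
      = ∑ σ : Finset (Fin N), ν k (Pi.single σ 1) σ := by
    rw [LinearMap.trace_eq_matrix_trace ℤ (Pi.basisFun ℤ (Finset (Fin N)))]
    rw [Matrix.trace]
    apply Finset.sum_congr rfl
    intro σ _
    simp [Matrix.diag, LinearMap.toMatrix_apply, Pi.basisFun_repr, Pi.basisFun_apply]
  rw [htr]
  set S : Finset (Finset (Fin N)) :=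
    Finset.univ.filter (fun σ => K σ ∧ σ.card = k + 1) with hSdef
  have hmemS : ∀ σ : Finset (Fin N), σ ∈ S ↔ (K σ ∧ σ.card = k + 1) := by
    intro σ; simp [hSdef]
  have hsum : ∑ σ : Finset (Fin N), ν k (Pi.single σ 1) σ
      = ∑ σ ∈ S, ν k (Pi.single σ 1) σ := by
    symm
    apply Finset.sum_subset (Finset.subset_univ S)
    intro σ _ hσ
    exact hsupp₂ k σ σ (by rw [← hmemS]; exact hσ)
  rw [hsum]
  -- diagonal invariance from equivariance
  have hdiag : ∀ σ ∈ S, ν k (Pi.single (σ.image ⇑φ) 1) (σ.image ⇑φ)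
      = ν k (Pi.single σ 1) σ := by
    intro σ hσ
    obtain ⟨hK, hc⟩ := (hmemS σ).mp hσ
    have he := hequiv k σ hK hc
    rw [phiSharp_single, map_smul] at he
    have h1 := congrFun (congrArg (fun x : Finset (Fin N) → ℤ => x) he) (σ.image ⇑φ)
    simp only [Pi.smul_apply, smul_eq_mul] at h1
    rw [phiSharp_apply_image] at h1
    exact mul_left_cancel₀ (chainSign_ne_zero φ σ) h1
  -- closure of S under the image map
  have hclosed : ∀ σ ∈ S, σ.image ⇑φ ∈ S := by
    intro σ hσ
    obtain ⟨hK, hc⟩ := (hmemS σ).mp hσ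
    exact (hmemS _).mpr ⟨hφK σ hK, by
      rw [Finset.card_image_of_injective σ φ.injective, hc]⟩
  -- freeness on S
  have hfr : ∀ j, 0 < j → j < p → ∀ σ ∈ S, (Finset.image ⇑φ)^[j] σ ≠ σ := by
    intro j hj1 hj2 σ hσ
    obtain ⟨hK, hc⟩ := (hmemS σ).mp hσ
    rw [hgiter]
    exact hfree j hj1 hj2 σ hK (hfaces σ hK)
  exact orbit_div p hp.pos (Finset.image ⇑φ)
    (Finset.image_injective φ.injective) hgp
    (fun σ => ν k (Pi.single σ 1) σ) S.card S le_rfl hclosed hfr hdiag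
end

section
/- If c is a proper coloring of the Schrijver graph on stable k-subsets of [n] with colors in [d] where d = n - 2k + 1, and X ∈ {+,-,0}^n is a sign vector with alternation length alt(X) ≥ 2k, then the color sets c applied to the stable k-subsets of X⁺ and of X⁻ are both nonempty and disjoint. -/
open Finset
open scoped Classical

/-- A `k`-subset of `[n]` is stable iff it contains no two cyclically adjacent
elements: `2 ≤ |a-b| ≤ n-2` for distinct `a, b`. -/
def IsStable (n : ℕ) (S : Finset ℕ) : Prop :=
  ∀ a ∈ S, ∀ b ∈ S, a ≠ b → 2 ≤ Nat.dist a b ∧ Nat.dist a b ≤ n - 2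

/-- The set of colors that `c` assigns to the stable `k`-subsets of `[n]`
contained in `A`. -/
noncomputable def colorsOf (n k : ℕ) {d : ℕ} (c : Finset ℕ → Fin d) (A : Finset ℕ) :
    Finset (Fin d) :=
  ((Finset.Icc 1 n).powerset.filter
    (fun S => S ⊆ A ∧ S.card = k ∧ IsStable n S)).image c

lemma strictMono_gap {k : ℕ} (f : Fin (2*k) → ℕ) (hmono : StrictMono f) :
    ∀ d : ℕ, ∀ p q : Fin (2*k), (p:ℕ) + d ≤ (q:ℕ) → f p + d ≤ f q := by
  intro d
  induction d with
  | zero => intro p q h; exact Nat.add_zero (f p) ▸ hmono.monotone (by exact Fin.le_def.mpr h)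
  | succ d ih =>
      intro p q h
      have hq' : (p:ℕ) + d < 2*k := by have := q.isLt; omega
      have h1 : f p + d ≤ f ⟨(p:ℕ)+d, hq'⟩ := ih p ⟨(p:ℕ)+d, hq'⟩ (le_refl _)
      have h2 : f ⟨(p:ℕ)+d, hq'⟩ < f q := hmono (by simp [Fin.lt_def]; omega)
      omega

lemma exists_stable_subset (n k : ℕ) (hk : 1 ≤ k) (A : Finset ℕ) (hA : A ⊆ Icc 1 n)
    (f : Fin (2*k) → ℕ) (hmono : StrictMono f) (hfn : ∀ i, f i ∈ Icc 1 n)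
    (e : ℕ) (he : e ≤ 1)
    (hmem : ∀ j : Fin k, f ⟨2*(j:ℕ)+e, by have := j.isLt; omega⟩ ∈ A) :
    ∃ S : Finset ℕ, S ⊆ Icc 1 n ∧ S ⊆ A ∧ S.card = k ∧ IsStable n S := by
  have hgap := strictMono_gap f hmono
  set g : Fin k → ℕ := fun j => f ⟨2*(j:ℕ)+e, by have := j.isLt; omega⟩ with hg
  have ginj : Function.Injective g := by
    intro i j hij
    by_contra hne
    rcases Ne.lt_or_gt (fun h : i = j => hne h) with h | h
    · exact absurd hij (ne_of_lt (hmono (Fin.mk_lt_mk.mpr (by omega))))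
    · exact absurd hij.symm (ne_of_lt (hmono (Fin.mk_lt_mk.mpr (by omega))))
  refine ⟨Finset.univ.image g, ?_, ?_, ?_, ?_⟩
  · intro x hx
    simp only [Finset.mem_image] at hx
    obtain ⟨j, _, rfl⟩ := hx
    exact hfn _
  · intro x hx
    simp only [Finset.mem_image] at hx
    obtain ⟨j, _, rfl⟩ := hx
    exact hmem j
  · rw [Finset.card_image_of_injective _ ginj, Finset.card_univ, Fintype.card_fin]
  · -- stability
    have hlow : ∀ p : Fin (2*k), (p:ℕ) + 1 ≤ f p := by
      intro p
      have h0 : (0:ℕ) < 2*k := by omega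
      have h1 : 1 ≤ f ⟨0, h0⟩ := (Finset.mem_Icc.mp (hfn ⟨0, h0⟩)).1
      have := hgap (p:ℕ) ⟨0, h0⟩ p (by show 0 + (p:ℕ) ≤ (p:ℕ); omega)
      omega
    have hhigh : ∀ p : Fin (2*k), f p + (2*k - 1 - (p:ℕ)) ≤ n := by
      intro p
      have hlt : 2*k - 1 < 2*k := by omega
      have h1 : f ⟨2*k-1, hlt⟩ ≤ n := (Finset.mem_Icc.mp (hfn ⟨2*k-1, hlt⟩)).2
      have := hgap (2*k - 1 - (p:ℕ)) p ⟨2*k-1, hlt⟩ (by show (p:ℕ) + (2*k-1-(p:ℕ)) ≤ 2*k-1; have := p.isLt; omega)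
      omega
    have key : ∀ i j : Fin k, (i:ℕ) < (j:ℕ) → 2 ≤ Nat.dist (g i) (g j) ∧ Nat.dist (g i) (g j) ≤ n - 2 := by
      intro i j hij
      have h2 : g i + 2 ≤ g j :=
        hgap 2 ⟨2*(i:ℕ)+e, by have := i.isLt; omega⟩ ⟨2*(j:ℕ)+e, by have := j.isLt; omega⟩
          (by show 2*(i:ℕ)+e+2 ≤ 2*(j:ℕ)+e; omega)
      have hl : 2*(i:ℕ) + e + 1 ≤ g i := hlow ⟨2*(i:ℕ)+e, by have := i.isLt; omega⟩
      have hh : g j + (2*k - 1 - (2*(j:ℕ)+e)) ≤ n := hhigh ⟨2*(j:ℕ)+e, by have := j.isLt; omega⟩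
      have hbound : ¬ (g i = 1 ∧ g j = n) := by
        rintro ⟨h1, hn'⟩
        have hi0 : 2*(i:ℕ) + e = 0 := by omega
        have hjt : 2*(j:ℕ) + e = 2*k - 1 := by
          have := j.isLt; omega
        omega
      have hgin : 1 ≤ g i := by omega
      have hgjn : g j ≤ n := by omega
      unfold Nat.dist
      omega
    intro a ha b hb hne
    simp only [Finset.mem_image] at ha hb
    obtain ⟨i, _, rfl⟩ := ha
    obtain ⟨j, _, rfl⟩ := hb
    have hij : i ≠ j := fun h => hne (h ▸ rfl)
    rcases Ne.lt_or_gt hij with h | h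
    · exact key i j h
    · rw [Nat.dist_comm]; exact key j i h

/-- If `c` is a proper coloring of the Schrijver graph on the stable `k`-subsets of
`[n]` with `d = n - 2k + 1` colors, and `(A, B)` is a sign vector (disjoint positive
and negative supports in `[n]`) with alternation length `≥ 2k` (witnessed by a
strictly increasing sequence `f` of `2k` positions in `A ∪ B` with alternating
signs), then the color sets of the stable `k`-subsets of `A` and of `B` are both
nonempty, and they are disjoint. -/
theorem schrijver_color_sets (n k d : ℕ) (hk : 1 ≤ k) (hn : 2 * k ≤ n)
    (hd : d = n - 2 * k + 1) (c : Finset ℕ → Fin d)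
    (hc : ∀ S T : Finset ℕ, S ⊆ Icc 1 n → S.card = k → IsStable n S →
      T ⊆ Icc 1 n → T.card = k → IsStable n T → Disjoint S T → c S ≠ c T)
    (A B : Finset ℕ) (hA : A ⊆ Icc 1 n) (hB : B ⊆ Icc 1 n) (hAB : Disjoint A B)
    (f : Fin (2 * k) → ℕ) (hmono : StrictMono f) (hf : ∀ i, f i ∈ A ∪ B)
    (halt : ∀ i : Fin (2 * k), ∀ h : (i : ℕ) + 1 < 2 * k,
      (f i ∈ A ↔ f ⟨(i : ℕ) + 1, h⟩ ∈ B)) :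
    (colorsOf n k c A).Nonempty ∧ (colorsOf n k c B).Nonempty ∧
      Disjoint (colorsOf n k c A) (colorsOf n k c B) := by
  have hfn : ∀ i, f i ∈ Icc 1 n := by
    intro i
    rcases Finset.mem_union.mp (hf i) with h | h
    · exact hA h
    · exact hB h
  have hnotB : ∀ i : Fin (2*k), (f i ∈ A ↔ ¬ (f i ∈ B)) := by
    intro i
    constructor
    · intro hiA hiB
      exact Finset.disjoint_left.mp hAB hiA hiB
    · intro hnB
      rcases Finset.mem_union.mp (hf i) with h | h
      · exact h
      · exact absurd h hnB
  have h0 : (0:ℕ) < 2*k := by omega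
  have hpar : ∀ (m : ℕ) (h : m < 2*k),
      (f ⟨m, h⟩ ∈ A ↔ (Even m ↔ f ⟨0, h0⟩ ∈ A)) := by
    intro m
    induction m with
    | zero => intro h; simp
    | succ m ih =>
        intro h
        have hm : m < 2*k := by omega
        have h1 := halt ⟨m, hm⟩ (by exact h)
        have h2 := hnotB ⟨m+1, h⟩
        have h3 := ih hm
        have h4 : Even (m+1) ↔ ¬ Even m := Nat.even_add_one
        tauto
  have mainA : ∀ e : ℕ, ∀ he : e ≤ 1,
      (∀ j : Fin k, f ⟨2*(j:ℕ)+e, by have := j.isLt; omega⟩ ∈ A) →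
      ∃ S : Finset ℕ, S ⊆ Icc 1 n ∧ S ⊆ A ∧ S.card = k ∧ IsStable n S :=
    fun e he hm => exists_stable_subset n k hk A hA f hmono hfn e he hm
  have mainB : ∀ e : ℕ, ∀ he : e ≤ 1,
      (∀ j : Fin k, f ⟨2*(j:ℕ)+e, by have := j.isLt; omega⟩ ∈ B) →
      ∃ S : Finset ℕ, S ⊆ Icc 1 n ∧ S ⊆ B ∧ S.card = k ∧ IsStable n S :=
    fun e he hm => exists_stable_subset n k hk B hB f hmono hfn e he hm
  have hex : (∃ S : Finset ℕ, S ⊆ Icc 1 n ∧ S ⊆ A ∧ S.card = k ∧ IsStable n S) ∧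
      (∃ T : Finset ℕ, T ⊆ Icc 1 n ∧ T ⊆ B ∧ T.card = k ∧ IsStable n T) := by
    by_cases h0A : f ⟨0, h0⟩ ∈ A
    · refine ⟨mainA 0 (by omega) ?_, mainB 1 (by omega) ?_⟩
      · intro j
        have := hpar (2*(j:ℕ)+0) (by have := j.isLt; omega)
        simp only [Nat.add_zero] at this ⊢
        rw [this]
        simp [Nat.even_mul, h0A]
      · intro j
        have h1 := hpar (2*(j:ℕ)+1) (by have := j.isLt; omega)
        have h2 := hnotB ⟨2*(j:ℕ)+1, by have := j.isLt; omega⟩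
        rw [h2] at h1
        have : ¬ Even (2*(j:ℕ)+1) := by simp [Nat.even_add_one, Nat.even_mul]
        tauto
    · refine ⟨mainA 1 (by omega) ?_, mainB 0 (by omega) ?_⟩
      · intro j
        have h1 := hpar (2*(j:ℕ)+1) (by have := j.isLt; omega)
        have : ¬ Even (2*(j:ℕ)+1) := by simp [Nat.even_add_one, Nat.even_mul]
        tauto
      · intro j
        have h1 := hpar (2*(j:ℕ)+0) (by have := j.isLt; omega)
        have h2 := hnotB ⟨2*(j:ℕ)+0, by have := j.isLt; omega⟩
        have : Even (2*(j:ℕ)+0) := by simp [Nat.even_mul]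
        tauto
  obtain ⟨⟨S, hS1, hS2, hS3, hS4⟩, ⟨T, hT1, hT2, hT3, hT4⟩⟩ := hex
  have hSmem : c S ∈ colorsOf n k c A := by
    unfold colorsOf
    exact Finset.mem_image_of_mem c (Finset.mem_filter.mpr
      ⟨Finset.mem_powerset.mpr hS1, hS2, hS3, hS4⟩)
  have hTmem : c T ∈ colorsOf n k c B := by
    unfold colorsOf
    exact Finset.mem_image_of_mem c (Finset.mem_filter.mpr
      ⟨Finset.mem_powerset.mpr hT1, hT2, hT3, hT4⟩)
  refine ⟨⟨c S, hSmem⟩, ⟨c T, hTmem⟩, ?_⟩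
  rw [Finset.disjoint_left]
  intro x hx hx'
  unfold colorsOf at hx hx'
  obtain ⟨S', hS', hcS'⟩ := Finset.mem_image.mp hx
  obtain ⟨T', hT', hcT'⟩ := Finset.mem_image.mp hx'
  rw [Finset.mem_filter, Finset.mem_powerset] at hS' hT'
  obtain ⟨hS'1, hS'2, hS'3, hS'4⟩ := hS'
  obtain ⟨hT'1, hT'2, hT'3, hT'4⟩ := hT'
  have hdisj : Disjoint S' T' :=
    Finset.disjoint_left.mpr fun a ha hb =>
      Finset.disjoint_left.mp hAB (hS'2 ha) (hT'2 hb)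
  exact hc S' T' hS'1 hS'3 hS'4 hT'1 hT'3 hT'4 hdisj (hcS'.trans hcT'.symm)
end
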